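/- arXiv:1703.07058 — 7 statements merged into one kernel-verified Lean document; each statement's English description precedes it below -/
import Mathlib

section
/- Let k, l be positive integers with gcd(k,l) = 1, and let z be a complex number with |z| = 1 such that (3 − z^k − z^{−k})(3 − z^l − z^{−l}) − 1 = 0. Then z = 1. -/
lemma aux_real (w : ℂ) (hw : ‖w‖ = 1) :
    3 - w - w⁻¹ = ((3 - 2 * w.re : ℝ) : ℂ) := by
  rw [Complex.inv_eq_conj hw]
  have h := Complex.add_conj w
  push_cast at h ⊢
  linear_combination -h

lemma aux_ge (w : ℂ) (hw : ‖w‖ = 1) : (1 : ℝ) ≤ 3 - 2 * w.re := by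
  have := Complex.re_le_norm w
  linarith [this.trans_eq hw]

lemma aux_eq_one (w : ℂ) (hw : ‖w‖ = 1) (hre : 3 - 2 * w.re = 1) : w = 1 := by
  have hre1 : w.re = 1 := by linarith
  have hsq : w.re ^ 2 + w.im ^ 2 = 1 := by
    have := Complex.sq_norm w
    rw [hw, Complex.normSq_apply] at this
    nlinarith
  have him : w.im = 0 := by nlinarith
  exact Complex.ext (by simp [hre1]) (by simp [him])

/-- If `k, l` are coprime positive integers and `z` is a complex number of modulus `1`
with `(3 - z^k - z^{-k})(3 - z^l - z^{-l}) - 1 = 0`, then `z = 1`. -/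
theorem unimodular_root_eq_one (k l : ℕ) (hk : 0 < k) (hl : 0 < l)
    (hcop : Nat.gcd k l = 1) (z : ℂ) (hz : ‖z‖ = 1)
    (heq : (3 - z ^ (k : ℤ) - z ^ (-(k : ℤ))) * (3 - z ^ (l : ℤ) - z ^ (-(l : ℤ))) - 1 = 0) :
    z = 1 := by
  have hz0 : z ≠ 0 := by
    intro h; rw [h] at hz; simp at hz
  have habsk : ‖z ^ (k : ℤ)‖ = 1 := by
    rw [norm_zpow, hz, one_zpow]
  have habsl : ‖z ^ (l : ℤ)‖ = 1 := by
    rw [norm_zpow, hz, one_zpow]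
  have hnegk : z ^ (-(k : ℤ)) = (z ^ (k : ℤ))⁻¹ := by rw [zpow_neg]
  have hnegl : z ^ (-(l : ℤ)) = (z ^ (l : ℤ))⁻¹ := by rw [zpow_neg]
  rw [hnegk, hnegl, aux_real _ habsk, aux_real _ habsl] at heq
  set A : ℝ := 3 - 2 * (z ^ (k : ℤ)).re with hA
  set B : ℝ := 3 - 2 * (z ^ (l : ℤ)).re with hB
  have hAB : A * B = 1 := by
    have : ((A * B : ℝ) : ℂ) = ((1 : ℝ) : ℂ) := by push_cast; linear_combination heq
    exact_mod_cast this
  have hA1 : 1 ≤ A := aux_ge _ habsk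
  have hB1 : 1 ≤ B := aux_ge _ habsl
  have hAe : A = 1 := by nlinarith
  have hBe : B = 1 := by nlinarith
  have hzk : z ^ (k : ℤ) = 1 := aux_eq_one _ habsk hAe
  have hzl : z ^ (l : ℤ) = 1 := aux_eq_one _ habsl hBe
  have hbez := Nat.gcd_eq_gcd_ab k l
  rw [hcop] at hbez
  calc z = z ^ (1 : ℤ) := (zpow_one z).symm
    _ = z ^ ((k : ℤ) * Nat.gcdA k l + (l : ℤ) * Nat.gcdB k l) := by rw [← hbez]; norm_num
    _ = (z ^ (k : ℤ)) ^ Nat.gcdA k l * (z ^ (l : ℤ)) ^ Nat.gcdB k l := by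
        rw [zpow_add₀ hz0, zpow_mul, zpow_mul]
    _ = 1 := by rw [hzk, hzl, one_zpow, one_zpow, one_mul]
end

section
/- Let k, l be positive integers and let F(X) = (3X^k − X^{2k} − 1)(3X^l − X^{2l} − 1) − X^{k+l} ∈ ℂ[X]. Then 1 is a root of F of multiplicity exactly 2, i.e. the root multiplicity of 1 in F equals 2. -/
open Polynomial in
/-- `1` is a root of multiplicity exactly `2` of the polynomial
`F(X) = (3X^k - X^{2k} - 1)(3X^l - X^{2l} - 1) - X^{k+l}` over `ℂ`, for positive `k, l`. -/
theorem rootMultiplicity_one_eq_two (k l : ℕ) (hk : 0 < k) (hl : 0 < l) :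
    Polynomial.rootMultiplicity (1 : ℂ)
      ((3 * X ^ k - X ^ (2 * k) - 1) * (3 * X ^ l - X ^ (2 * l) - 1) - X ^ (k + l)) = 2 := by
  set Sk : ℂ[X] := ∑ i ∈ Finset.range k, X ^ i with hSkdef
  set Sl : ℂ[X] := ∑ i ∈ Finset.range l, X ^ i with hSldef
  have hk1 : (X : ℂ[X]) ^ k - 1 = (X - 1) * Sk := by
    rw [hSkdef, ← geom_sum_mul, mul_comm]
  have hl1 : (X : ℂ[X]) ^ l - 1 = (X - 1) * Sl := by
    rw [hSldef, ← geom_sum_mul, mul_comm]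
  set g : ℂ[X] := -X ^ k * Sl ^ 2 - X ^ l * Sk ^ 2 + (X - 1) ^ 2 * Sk ^ 2 * Sl ^ 2 with hg
  have hF : (3 * X ^ k - X ^ (2 * k) - 1) * (3 * X ^ l - X ^ (2 * l) - 1) - X ^ (k + l)
      = (X - 1) ^ 2 * g := by
    have key : (3 * X ^ k - X ^ (2 * k) - 1) * (3 * X ^ l - X ^ (2 * l) - 1) - X ^ (k + l)
        = -X ^ k * ((X : ℂ[X]) ^ l - 1) ^ 2 - X ^ l * ((X : ℂ[X]) ^ k - 1) ^ 2
          + ((X : ℂ[X]) ^ k - 1) ^ 2 * ((X : ℂ[X]) ^ l - 1) ^ 2 := by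
      rw [mul_comm 2 k, mul_comm 2 l, pow_mul, pow_mul, pow_add]; ring
    rw [key, hk1, hl1, hg]; ring
  have hSk1 : Sk.eval 1 = (k : ℂ) := by
    simp [hSkdef, eval_finset_sum]
  have hSl1 : Sl.eval 1 = (l : ℂ) := by
    simp [hSldef, eval_finset_sum]
  have hg1 : g.eval 1 = -((k : ℂ) ^ 2 + l ^ 2) := by
    simp [hg, hSk1, hSl1]; ring
  have hgne : ¬ g.IsRoot 1 := by
    have hne : ((k ^ 2 + l ^ 2 : ℕ) : ℂ) ≠ 0 := Nat.cast_ne_zero.mpr (by positivity)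
    rw [Polynomial.IsRoot, hg1]
    intro h
    apply hne
    push_cast
    linear_combination -h
  have hg0 : g ≠ 0 := fun h => hgne (by simp [h])
  have hX : (X - 1 : ℂ[X]) ≠ 0 := by
    simpa using Polynomial.X_sub_C_ne_zero (1 : ℂ)
  rw [hF, Polynomial.rootMultiplicity_mul (mul_ne_zero (pow_ne_zero 2 hX) hg0)]
  have h1 : Polynomial.rootMultiplicity (1 : ℂ) ((X - 1) ^ 2) = 2 := by
    simpa using Polynomial.rootMultiplicity_X_sub_C_pow (1 : ℂ) 2
  rw [h1, Polynomial.rootMultiplicity_eq_zero hgne]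
end

section
/- Let n ≥ 1 and m ≥ 1 be integers, let z_1, …, z_m be nonzero complex numbers with z_s ≠ 1 for every s, and set w_s = (z_s + z_s⁻¹)/2 and H(z) = ∏_{s=1}^{m} (z − z_s)(z − z_s⁻¹). Then ∏_{j=1}^{n−1} H(ε_n^j) = ∏_{s=1}^{m} (T_n(w_s) − 1)/(w_s − 1), where ε_n = exp(2πi/n). -/
open Polynomial Polynomial.Chebyshev Finset in
private lemma key_single (n : ℕ) (hn : 1 ≤ n) (z : ℂ) (hz0 : z ≠ 0) (hz1 : z ≠ 1) :
    ∏ j ∈ Finset.Ico 1 n,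
        ((Complex.exp (2 * Real.pi * Complex.I / n) ^ j - z) *
          (Complex.exp (2 * Real.pi * Complex.I / n) ^ j - z⁻¹)) =
      ((T ℂ n).eval ((z + z⁻¹) / 2) - 1) / ((z + z⁻¹) / 2 - 1) := by
  set ε : ℂ := Complex.exp (2 * Real.pi * Complex.I / n) with hε
  have hne : (n : ℕ) ≠ 0 := by omega
  have hprim : IsPrimitiveRoot ε n := Complex.isPrimitiveRoot_exp n hne
  -- product over range n of (x - ε^j) equals x^n - 1
  have hx : ∀ x : ℂ, ∏ j ∈ Finset.range n, (x - ε ^ j) = x ^ n - 1 := by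
    intro x
    have hpoly := X_pow_sub_C_eq_prod hprim (by omega) (one_pow n)
    have := congrArg (Polynomial.eval x) hpoly
    simpa [Polynomial.eval_prod] using this.symm
  -- z⁻¹ ≠ 1
  have hz1' : z⁻¹ ≠ 1 := by
    intro h
    exact hz1 (by field_simp at h; simp [h])
  -- denominator nonzero facts
  have h1z : (1 : ℂ) - z ≠ 0 := fun h => hz1 (by linear_combination -h)
  have h1zi : (1 : ℂ) - z⁻¹ ≠ 0 := fun h => hz1' (by linear_combination -h)
  have hw : (z + z⁻¹) / 2 - 1 ≠ 0 := by
    have h2 : (z + z⁻¹) / 2 - 1 = (z - 1) ^ 2 / (2 * z) := by field_simp; ring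
    rw [h2]
    exact div_ne_zero (pow_ne_zero _ (sub_ne_zero.mpr hz1)) (by simp [hz0])
  -- full product over range n
  have hrange : ∏ j ∈ Finset.range n, ((ε ^ j - z) * (ε ^ j - z⁻¹))
      = (z ^ n - 1) * ((z⁻¹) ^ n - 1) := by
    have : ∀ j, (ε ^ j - z) * (ε ^ j - z⁻¹) = (z - ε ^ j) * (z⁻¹ - ε ^ j) := by
      intro j; ring
    rw [Finset.prod_congr rfl (fun j _ => this j), Finset.prod_mul_distrib, hx, hx]
  -- split off j = 0
  have hsplit : ∏ j ∈ Finset.range n, ((ε ^ j - z) * (ε ^ j - z⁻¹))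
      = ((1 - z) * (1 - z⁻¹)) *
        ∏ j ∈ Finset.Ico 1 n, ((ε ^ j - z) * (ε ^ j - z⁻¹)) := by
    rw [Finset.range_eq_Ico, Finset.prod_eq_prod_Ico_succ_bot (by omega)]
    simp
  -- compute T_n at (z + z⁻¹)/2
  have hT : (T ℂ n).eval ((z + z⁻¹) / 2) = (z ^ n + (z⁻¹) ^ n) / 2 := by
    set θ : ℂ := -Complex.I * Complex.log z with hθ
    have hcos : Complex.cos θ = (z + z⁻¹) / 2 := by
      rw [Complex.cos, hθ]
      have h1 : -Complex.I * Complex.log z * Complex.I = Complex.log z := by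
        have := Complex.I_mul_I
        ring_nf
        rw [Complex.I_sq]
        ring
      rw [h1, ← neg_mul, neg_neg]
      rw [show Complex.I * Complex.log z * Complex.I = -Complex.log z by
        have := Complex.I_sq; ring_nf; rw [Complex.I_sq]; ring]
      rw [Complex.exp_log hz0, Complex.exp_neg, Complex.exp_log hz0]
    have hcosn : Complex.cos ((n : ℂ) * θ) = (z ^ n + (z⁻¹) ^ n) / 2 := by
      rw [Complex.cos]
      have h1 : (n : ℂ) * θ * Complex.I = (n : ℂ) * Complex.log z := by
        rw [hθ]; have := Complex.I_sq; ring_nf; rw [Complex.I_sq]; ring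
      rw [h1, show (-((n:ℂ) * θ)) * Complex.I = (n : ℂ) * (-Complex.log z) by
        linear_combination -h1]
      rw [Complex.exp_nat_mul, Complex.exp_nat_mul, Complex.exp_log hz0,
        Complex.exp_neg, Complex.exp_log hz0]
    have := Polynomial.Chebyshev.T_complex_cos θ (n : ℤ)
    rw [hcos] at this
    rw [this]
    push_cast
    exact hcosn
  -- put it together
  have hIco : ∏ j ∈ Finset.Ico 1 n, ((ε ^ j - z) * (ε ^ j - z⁻¹))
      = ((z ^ n - 1) * ((z⁻¹) ^ n - 1)) / ((1 - z) * (1 - z⁻¹)) := by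
    rw [eq_div_iff (mul_ne_zero h1z h1zi), ← hrange, hsplit]
    ring
  rw [hIco, hT]
  rw [div_eq_div_iff (mul_ne_zero h1z h1zi) hw]
  have hzn : z ^ n * (z⁻¹) ^ n = 1 := by
    rw [← mul_pow, mul_inv_cancel₀ hz0, one_pow]
  have hzz : z * z⁻¹ = 1 := mul_inv_cancel₀ hz0
  linear_combination ((z + z⁻¹)/2 - 1) * hzn - ((z ^ n + (z⁻¹)^n)/2 - 1) * hzz

open Polynomial Polynomial.Chebyshev Finset in
/-- For nonzero complex numbers `z_1, …, z_m`, all `≠ 1`, with `w_s = (z_s + z_s⁻¹)/2` and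
`H(z) = ∏_s (z - z_s)(z - z_s⁻¹)`:
`∏_{j=1}^{n-1} H(ε_n^j) = ∏_s (T_n(w_s) - 1)/(w_s - 1)`, where `ε_n = exp(2πi/n)`. -/
theorem prod_H_roots_of_unity (n m : ℕ) (hn : 1 ≤ n) (hm : 1 ≤ m)
    (z : Fin m → ℂ) (hz0 : ∀ s, z s ≠ 0) (hz1 : ∀ s, z s ≠ 1) :
    ∏ j ∈ Finset.Ico 1 n,
        (∏ s, ((Complex.exp (2 * Real.pi * Complex.I / n) ^ j - z s) *
          (Complex.exp (2 * Real.pi * Complex.I / n) ^ j - (z s)⁻¹))) =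
      ∏ s, (((T ℂ n).eval ((z s + (z s)⁻¹) / 2) - 1) / ((z s + (z s)⁻¹) / 2 - 1)) := by
  rw [Finset.prod_comm]
  exact Finset.prod_congr rfl fun s _ => key_single n hn (z s) (hz0 s) (hz1 s)
end

section
/- Let n, k, l be integers with 1 ≤ k ≤ l, 2l < n and gcd(k,l) = 1. Then n divides the number of spanning trees τ_{k,l}(n) of the I-graph I(n,k,l). -/
open Polynomial

/-- The relation generating the I-graph `I(n,k,l)`: `u_i ~ u_{i+l}`, `v_i ~ v_{i+k}`,
`u_i ~ v_i` (the left summand are the `u`'s with step `l`, the right summand the `v`'s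
with step `k`). -/
def IRel (n k l : ℕ) : (ZMod n ⊕ ZMod n) → (ZMod n ⊕ ZMod n) → Prop
  | .inl i, .inl j => j = i + (l : ZMod n)
  | .inr i, .inr j => j = i + (k : ZMod n)
  | .inl i, .inr j => i = j
  | .inr _, .inl _ => False

/-- The I-graph `I(n,k,l)`. -/
def IGraph (n k l : ℕ) : SimpleGraph (ZMod n ⊕ ZMod n) :=
  SimpleGraph.fromRel (IRel n k l)

noncomputable instance (n k l : ℕ) : DecidableRel (IGraph n k l).Adj :=
  fun _ _ => Classical.dec _

/-- The number of spanning trees of the I-graph `I(n,k,l)`. -/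
noncomputable def tauI (n k l : ℕ) : ℕ :=
  Nat.card {H : (IGraph n k l).Subgraph // H.IsSpanning ∧ H.coe.IsTree}

/-- The Laplacian matrix `L = D - A` of the I-graph, with entries in `R`. -/
noncomputable def lapI (n k l : ℕ) [NeZero n] (R : Type) [AddGroupWithOne R] :
    Matrix (ZMod n ⊕ ZMod n) (ZMod n ⊕ ZMod n) R :=
  (IGraph n k l).lapMatrix R

/-- The cokernel of a square integer matrix, viewed as a `ℤ`-linear map. -/
abbrev cokerM {m : Type} [Fintype m] [DecidableEq m] (M : Matrix m m ℤ) : Type :=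
  (m → ℤ) ⧸ LinearMap.range M.mulVecLin

/-- The polynomial `F(X) = (3X^k - X^{2k} - 1)(3X^l - X^{2l} - 1) - X^{k+l}`. -/
noncomputable def FpolyI (k l : ℕ) : Polynomial ℤ :=
  (3 * X ^ k - X ^ (2 * k) - 1) * (3 * X ^ l - X ^ (2 * l) - 1) - X ^ (k + l)

/-- The companion matrix of a (monic, degree `s`) polynomial
`F = X^s + a_{s-1} X^{s-1} + ⋯ + a_0`: ones on the superdiagonal and last row
`(-a_0, …, -a_{s-1})`. -/
noncomputable def companionM (F : Polynomial ℤ) (s : ℕ) : Matrix (Fin s) (Fin s) ℤ :=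
  fun i j => if (i : ℕ) = s - 1 then -F.coeff j
    else if (j : ℕ) = (i : ℕ) + 1 then 1 else 0

/-- The Jacobian group of the I-graph `I(n,k,l)`: the torsion subgroup of the cokernel of
the Laplacian. -/
noncomputable def JacI (n k l : ℕ) [NeZero n] : AddSubgroup (cokerM (lapI n k l ℤ)) :=
  AddCommGroup.torsion (cokerM (lapI n k l ℤ))

/-! ### Auxiliary machinery: a free rotation action on spanning trees -/

open SimpleGraph

open MulAction in
/-- If a finite group acts freely (via a permutation representation) on a finite type,
then the order of the group divides the cardinality of the type. -/
lemma card_dvd_of_free_permHom {G X : Type*} [Group G] [Finite G] [Finite X]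
    (ρ : G →* Equiv.Perm X) (h : ∀ g x, ρ g x = x → g = 1) :
    Nat.card G ∣ Nat.card X := by
  classical
  letI : MulAction G X := MulAction.compHom X ρ
  have hsmul : ∀ (g : G) (x : X), g • x = ρ g x := fun g x => rfl
  cases nonempty_fintype X
  cases nonempty_fintype G
  rw [Nat.card_congr (selfEquivSigmaOrbitsQuotientStabilizer G X),
    Nat.card_eq_fintype_card (α := (ω : Quotient (orbitRel G X)) × G ⧸ stabilizer G ω.out),
    Fintype.card_sigma]
  refine Finset.dvd_sum fun ω _ => ?_
  have hst : stabilizer G (Quotient.out ω) = ⊥ := by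
    ext g
    simp only [mem_stabilizer_iff, Subgroup.mem_bot]
    exact ⟨fun hg => h g _ hg, by rintro rfl; simp [hsmul]⟩
  rw [← Nat.card_eq_fintype_card, hst,
    Nat.card_congr (QuotientGroup.quotientBot (G := G)).toEquiv]

/-- Build a monoid hom into `Equiv.Perm X` from an additive family of maps. -/
def permHomOfAdd {A X : Type*} [AddGroup A] (u : A → X → X)
    (h0 : u 0 = id) (hadd : ∀ a b, u (a + b) = u a ∘ u b) :
    Multiplicative A →* Equiv.Perm X where
  toFun a :=
    { toFun := u a.toAdd
      invFun := u (-a.toAdd)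
      left_inv := fun x => by
        have := congrFun (hadd (-a.toAdd) (a.toAdd)) x
        simp only [neg_add_cancel, h0, Function.comp_apply, id_eq] at this
        exact this.symm
      right_inv := fun x => by
        have := congrFun (hadd (a.toAdd) (-a.toAdd)) x
        simp only [add_neg_cancel, h0, Function.comp_apply, id_eq] at this
        exact this.symm }
  map_one' := Equiv.ext fun x => by simp [h0]
  map_mul' a b := Equiv.ext fun x => by
    simp only [Equiv.coe_fn_mk, toAdd_mul, Equiv.Perm.coe_mul, Function.comp_apply]
    exact congrFun (hadd a.toAdd b.toAdd) x

lemma permHomOfAdd_apply {A X : Type*} [AddGroup A] (u : A → X → X)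
    (h0 : u 0 = id) (hadd : ∀ a b, u (a + b) = u a ∘ u b)
    (a : Multiplicative A) (x : X) :
    permHomOfAdd u h0 hadd a x = u a.toAdd x := rfl

instance {V : Type*} [Finite V] {G : SimpleGraph V} : Finite G.Subgraph :=
  Finite.of_injective (fun H => (H.verts, H.Adj))
    (fun H1 H2 h => by
      rw [Prod.mk.injEq] at h
      exact SimpleGraph.Subgraph.ext h.1 h.2)

/-- Transport `IsTree` along a graph isomorphism. -/
lemma IsTree.map_iso' {V W : Type*} {G : SimpleGraph V} {G' : SimpleGraph W}
    (φ : G ≃g G') (h : G.IsTree) : G'.IsTree := by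
  obtain ⟨hconn, hac⟩ := h
  constructor
  · exact (SimpleGraph.Iso.connected_iff φ).mp hconn
  · intro v c hc
    exact hac _ ((SimpleGraph.Walk.map_isCycle_iff_of_injective
      (p := c) (f := φ.symm.toHom) (fun a b hab => φ.symm.injective hab)).mpr hc)

/-- Rotation by `j` on the vertices of the I-graph. -/
def rotE (n : ℕ) (j : ZMod n) : (ZMod n ⊕ ZMod n) ≃ (ZMod n ⊕ ZMod n) :=
  Equiv.sumCongr (Equiv.addRight j) (Equiv.addRight j)

lemma rotE_zero (n : ℕ) : (rotE n 0 : _ → _) = id := by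
  funext a; cases a <;> simp [rotE]

lemma rotE_add (n : ℕ) (i j : ZMod n) :
    (rotE n (i + j) : _ → _) = (rotE n j : _ → _) ∘ (rotE n i : _ → _) := by
  funext a; cases a <;> simp [rotE, add_assoc]

lemma rot_irel (n k l : ℕ) (j : ZMod n) (a b : ZMod n ⊕ ZMod n) :
    IRel n k l (rotE n j a) (rotE n j b) ↔ IRel n k l a b := by
  cases a <;> cases b <;> simp [IRel, rotE, add_right_comm _ j]

/-- Rotation as a graph automorphism of the I-graph. -/
def rotIso (n k l : ℕ) (j : ZMod n) : IGraph n k l ≃g IGraph n k l where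
  toEquiv := rotE n j
  map_rel_iff' := by
    intro a b
    simp only [IGraph, SimpleGraph.fromRel_adj, ne_eq, EmbeddingLike.apply_eq_iff_eq, rot_irel]

def rotHom (n k l : ℕ) (j : ZMod n) : IGraph n k l →g IGraph n k l :=
  (rotIso n k l j).toHom

/-- The action of rotation on subgraphs of the I-graph. -/
def Fmap (n k l : ℕ) (j : ZMod n) (H : (IGraph n k l).Subgraph) : (IGraph n k l).Subgraph :=
  H.map (rotHom n k l j)

lemma Fmap_zero (n k l : ℕ) (H : (IGraph n k l).Subgraph) : Fmap n k l 0 H = H := by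
  have h : rotHom n k l 0 = SimpleGraph.Hom.id := by
    ext a; exact congrFun (rotE_zero n) a
  rw [Fmap, h, SimpleGraph.Subgraph.map_id]

lemma Fmap_add (n k l : ℕ) (i j : ZMod n) (H : (IGraph n k l).Subgraph) :
    Fmap n k l (i + j) H = Fmap n k l j (Fmap n k l i H) := by
  have h : rotHom n k l (i + j) = (rotHom n k l j).comp (rotHom n k l i) := by
    ext a; exact congrFun (rotE_add n i j) a
  rw [Fmap, h, SimpleGraph.Subgraph.map_comp]; rfl

lemma Fmap_add' (n k l : ℕ) (i j : ZMod n) (H : (IGraph n k l).Subgraph) :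
    Fmap n k l (i + j) H = Fmap n k l i (Fmap n k l j H) := by
  rw [add_comm, Fmap_add]

lemma Fmap_spanning {n k l : ℕ} (j : ZMod n) {H : (IGraph n k l).Subgraph}
    (h : H.IsSpanning) : (Fmap n k l j H).IsSpanning := by
  intro v
  exact ⟨(rotE n j).symm v, h _, (rotE n j).apply_symm_apply v⟩

/-- The iso between spanning coercions induced by rotation. -/
def spanningCoeIsoMap (n k l : ℕ) (j : ZMod n) (H : (IGraph n k l).Subgraph) :
    H.spanningCoe ≃g (Fmap n k l j H).spanningCoe where
  toEquiv := rotE n j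
  map_rel_iff' := by
    intro a b
    simp only [Subgraph.spanningCoe_adj]
    constructor
    · rintro ⟨u, v, huv, hu, hv⟩
      rwa [(rotE n j).injective hu, (rotE n j).injective hv] at huv
    · intro h
      exact ⟨a, b, h, rfl, rfl⟩

lemma Fmap_tree {n k l : ℕ} (j : ZMod n) {H : (IGraph n k l).Subgraph}
    (hs : H.IsSpanning) (ht : H.coe.IsTree) : (Fmap n k l j H).coe.IsTree := by
  have h1 : H.spanningCoe.IsTree :=
    IsTree.map_iso' (H.spanningCoeEquivCoeOfSpanning hs).symm ht
  have h2 : (Fmap n k l j H).spanningCoe.IsTree :=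
    IsTree.map_iso' (spanningCoeIsoMap n k l j H) h1
  exact IsTree.map_iso' ((Fmap n k l j H).spanningCoeEquivCoeOfSpanning
    (Fmap_spanning j hs)) h2

lemma Fmap_edge_mem {n k l : ℕ} {j : ZMod n} {H : (IGraph n k l).Subgraph}
    (hstab : Fmap n k l j H = H) {e : Sym2 (ZMod n ⊕ ZMod n)}
    (he : e ∈ H.spanningCoe.edgeSet) :
    Sym2.map (rotE n j) e ∈ H.spanningCoe.edgeSet := by
  induction e with
  | _ a b =>
    rw [Sym2.map_pair_eq]
    rw [SimpleGraph.mem_edgeSet] at he ⊢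
    simp only [Subgraph.spanningCoe_adj] at he ⊢
    have : (Fmap n k l j H).Adj (rotE n j a) (rotE n j b) := ⟨a, b, he, rfl, rfl⟩
    rwa [hstab] at this

/-- A nonzero rotation moves every edge of the I-graph. -/
lemma rot_fix_edge {n k l : ℕ} (hk : 1 ≤ k) (hkl : k ≤ l) (hn : 2 * l < n)
    (j : ZMod n) (a b : ZMod n ⊕ ZMod n) (hadj : (IGraph n k l).Adj a b)
    (hfix : Sym2.map (rotE n j) (s(a, b)) = s(a, b)) : j = 0 := by
  haveI : NeZero n := ⟨by omega⟩
  rw [Sym2.map_pair_eq, Sym2.eq_iff] at hfix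
  rw [IGraph, SimpleGraph.fromRel_adj] at hadj
  obtain ⟨hne, hrel⟩ := hadj
  have key : ∀ m : ℕ, 0 < 2 * m → 2 * m < n → (j = (m : ZMod n) ∨ j = -(m : ZMod n)) →
      j + j = 0 → False := by
    intro m hm1 hm2 hj hjj
    have h2m : ((2 * m : ℕ) : ZMod n) = 0 := by
      push_cast
      rcases hj with rfl | rfl
      · rw [two_mul]; exact hjj
      · rw [two_mul, ← neg_eq_zero, neg_add]; exact hjj
    rw [ZMod.natCast_eq_zero_iff] at h2m
    have := Nat.le_of_dvd hm1 h2m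
    omega
  rcases hfix with ⟨h1, h2⟩ | ⟨h1, h2⟩
  · cases a with
    | inl i => simp [rotE] at h1; exact h1
    | inr i => simp [rotE] at h1; exact h1
  · cases a <;> cases b <;> simp [rotE] at h1 h2
    case inl.inl i i' =>
      simp only [IRel] at hrel
      have hjj : j + j = 0 := by
        have h3 : i + (j + j) = i + 0 := by rw [← add_assoc, h1, h2, add_zero]
        exact add_left_cancel h3
      rcases hrel with h | h
      · exact (key l (by omega) hn (Or.inl (add_left_cancel (a := i)
          (by rw [h1, h]))) hjj).elim
      · exact (key l (by omega) hn (Or.inl (add_left_cancel (a := i')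
          (by rw [h2, h]))) hjj).elim
    case inr.inr i i' =>
      simp only [IRel] at hrel
      have hjj : j + j = 0 := by
        have h3 : i + (j + j) = i + 0 := by rw [← add_assoc, h1, h2, add_zero]
        exact add_left_cancel h3
      rcases hrel with h | h
      · exact (key k (by omega) (by omega) (Or.inl (add_left_cancel (a := i)
          (by rw [h1, h]))) hjj).elim
      · exact (key k (by omega) (by omega) (Or.inl (add_left_cancel (a := i')
          (by rw [h2, h]))) hjj).elim

lemma edge_fix {n k l : ℕ} (hk : 1 ≤ k) (hkl : k ≤ l) (hn : 2 * l < n)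
    (H : (IGraph n k l).Subgraph) (x : ZMod n) (e : Sym2 (ZMod n ⊕ ZMod n))
    (he : e ∈ H.spanningCoe.edgeSet) (hf : Sym2.map (rotE n x) e = e) : x = 0 := by
  induction e with
  | _ a b =>
    rw [SimpleGraph.mem_edgeSet, Subgraph.spanningCoe_adj] at he
    exact rot_fix_edge hk hkl hn x a b (H.adj_sub he) hf

/-- The number of edges of a spanning tree subgraph of the I-graph. -/
lemma card_edges_of_tree {n k l : ℕ} [NeZero n] {H : (IGraph n k l).Subgraph}
    (hs : H.IsSpanning) (ht : H.coe.IsTree) :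
    Nat.card H.spanningCoe.edgeSet = 2 * n - 1 := by
  classical
  have htree : H.spanningCoe.IsTree :=
    IsTree.map_iso' (H.spanningCoeEquivCoeOfSpanning hs).symm ht
  letI : Fintype H.spanningCoe.edgeSet := Fintype.ofFinite _
  have hcard := htree.card_edgeFinset
  rw [SimpleGraph.edgeFinset_card] at hcard
  have hV : Fintype.card (ZMod n ⊕ ZMod n) = 2 * n := by
    rw [Fintype.card_sum, ZMod.card]; omega
  rw [Nat.card_eq_fintype_card]
  omega

/-- If a rotation stabilizes a spanning tree of the I-graph, it is trivial. -/
lemma stab_free {n k l : ℕ} (hk : 1 ≤ k) (hkl : k ≤ l) (hn : 2 * l < n)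
    (H : (IGraph n k l).Subgraph) (hs : H.IsSpanning) (ht : H.coe.IsTree)
    (j : ZMod n) (hj : Fmap n k l j H = H) : j = 0 := by
  haveI : NeZero n := ⟨by omega⟩
  classical
  set St : AddSubgroup (ZMod n) :=
    { carrier := {g | Fmap n k l g H = H}
      zero_mem' := Fmap_zero n k l H
      add_mem' := by
        intro a b ha hb
        show Fmap n k l (a + b) H = H
        rw [Fmap_add, ha, hb]
      neg_mem' := by
        intro a ha
        show Fmap n k l (-a) H = H
        conv_lhs => rw [← ha]
        rw [← Fmap_add, add_neg_cancel, Fmap_zero] } with hSt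
  have hjSt : j ∈ St := hj
  set E := H.spanningCoe.edgeSet
  have hmem : ∀ (g : St) (e : Sym2 (ZMod n ⊕ ZMod n)), e ∈ E →
      Sym2.map (rotE n (g : ZMod n)) e ∈ E := fun g e he => Fmap_edge_mem g.2 he
  let uE : St → E → E := fun g e => ⟨Sym2.map (rotE n (g : ZMod n)) e.1, hmem g e.1 e.2⟩
  have uE_zero : uE 0 = id := by
    funext e
    apply Subtype.ext
    show Sym2.map (rotE n ((0 : St) : ZMod n)) e.1 = e.1
    rw [ZeroMemClass.coe_zero, rotE_zero, Sym2.map_id]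
    rfl
  have uE_add : ∀ a b : St, uE (a + b) = uE a ∘ uE b := by
    intro a b
    funext e
    apply Subtype.ext
    show Sym2.map (rotE n ((a + b : St) : ZMod n)) e.1
      = Sym2.map (rotE n (a : ZMod n)) (Sym2.map (rotE n (b : ZMod n)) e.1)
    rw [Sym2.map_map, AddSubgroup.coe_add]
    congr 1
    rw [add_comm]
    exact rotE_add n (b : ZMod n) (a : ZMod n)
  have hfree : ∀ (g : Multiplicative St) (e : E),
      permHomOfAdd uE uE_zero uE_add g e = e → g = 1 := by
    intro g e hge
    have hval : Sym2.map (rotE n ((g.toAdd : St) : ZMod n)) e.1 = e.1 :=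
      congrArg Subtype.val hge
    have h0 : ((g.toAdd : St) : ZMod n) = 0 :=
      edge_fix hk hkl hn H _ e.1 e.2 hval
    have : (g.toAdd : St) = 0 := Subtype.ext h0
    simpa using this
  have hdvd1 : Nat.card (Multiplicative St) ∣ Nat.card E :=
    card_dvd_of_free_permHom (G := Multiplicative St)
      (permHomOfAdd uE uE_zero uE_add) hfree
  rw [show Nat.card (Multiplicative St) = Nat.card St from rfl] at hdvd1
  have hdvd2 : Nat.card St ∣ n := by
    have := AddSubgroup.card_addSubgroup_dvd_card St
    rwa [Nat.card_zmod] at this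
  have hE : Nat.card E = 2 * n - 1 := card_edges_of_tree hs ht
  have hcop : Nat.Coprime n (2 * n - 1) := by
    have h1 : 2 * n - 1 = (n - 1) + n := by omega
    rw [h1, Nat.coprime_add_self_right]
    have h2 : n = (n - 1) + 1 := by omega
    rw [h2]
    simp [Nat.coprime_self_add_left]
  have hone : Nat.card St = 1 :=
    Nat.dvd_one.mp (hcop.gcd_eq_one ▸ Nat.dvd_gcd hdvd2 (hE ▸ hdvd1))
  have hbot : St = ⊥ := AddSubgroup.card_eq_one.mp hone
  rw [hbot] at hjSt
  exact AddSubgroup.mem_bot.mp hjSt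

/-- `n` divides the number of spanning trees of the I-graph `I(n,k,l)`. -/
theorem n_dvd_tau_IGraph (n k l : ℕ)
    (hk : 1 ≤ k) (hkl : k ≤ l) (hn : 2 * l < n) (hcop : Nat.gcd k l = 1) :
    n ∣ tauI n k l := by
  haveI : NeZero n := ⟨by omega⟩
  classical
  set T := {H : (IGraph n k l).Subgraph // H.IsSpanning ∧ H.coe.IsTree} with hT
  let uT : ZMod n → T → T := fun j t =>
    ⟨Fmap n k l j t.1, Fmap_spanning j t.2.1, Fmap_tree j t.2.1 t.2.2⟩
  have uT_zero : uT 0 = id := by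
    funext t
    exact Subtype.ext (Fmap_zero n k l t.1)
  have uT_add : ∀ a b, uT (a + b) = uT a ∘ uT b := by
    intro a b
    funext t
    exact Subtype.ext (Fmap_add' n k l a b t.1)
  have hfree : ∀ (g : Multiplicative (ZMod n)) (t : T),
      permHomOfAdd uT uT_zero uT_add g t = t → g = 1 := by
    intro g t hgt
    have hval : Fmap n k l g.toAdd t.1 = t.1 := congrArg Subtype.val hgt
    have := stab_free hk hkl hn t.1 t.2.1 t.2.2 g.toAdd hval
    simpa using this
  have hdvd : Nat.card (Multiplicative (ZMod n)) ∣ Nat.card T :=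
    card_dvd_of_free_permHom (permHomOfAdd uT uT_zero uT_add) hfree
  have hcardG : Nat.card (Multiplicative (ZMod n)) = n := Nat.card_zmod n
  rw [hcardG] at hdvd
  exact hdvd
end

section
/- Let n, k, l be integers with 1 ≤ k ≤ l, 2l < n and gcd(k,l) = 1. Then the number of spanning trees of the I-graph I(n,k,l) satisfies τ_{k,l}(n) ≥ n³. -/
open Polynomial

open SimpleGraph

namespace IGraphAux

lemma reachable_of_adj_reachable {V : Type*} {G G' : SimpleGraph V}
    (h : ∀ a b : V, G.Adj a b → G'.Reachable a b) :
    ∀ a b : V, G.Reachable a b → G'.Reachable a b := by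
  intro a b hab
  obtain ⟨q⟩ := hab
  induction q with
  | nil => exact SimpleGraph.Reachable.refl _
  | cons h' q ih => exact (h _ _ h').trans ih

/-- In a connected finite graph, `card V ≤ #edges + 1`. -/
lemma card_le_ncard_edgeSet_add_one {V : Type*} [Finite V] (G : SimpleGraph V)
    (hc : G.Connected) : Nat.card V ≤ G.edgeSet.ncard + 1 := by
  classical
  cases nonempty_fintype V
  obtain ⟨r⟩ : Nonempty V := hc.nonempty
  have key : ∀ v : V, ∃ w : V, v ≠ r → G.Adj v w ∧ G.dist w r < G.dist v r := by
    intro v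
    by_cases hv : v = r
    · exact ⟨r, fun h => absurd hv h⟩
    · have hd : G.dist v r ≠ 0 := Nat.pos_iff_ne_zero.mp (hc.pos_dist_of_ne hv)
      obtain ⟨p, hp⟩ := SimpleGraph.exists_walk_of_dist_ne_zero hd
      cases p with
      | nil => exact absurd rfl hv
      | @cons _ w _ h q =>
        refine ⟨w, fun _ => ⟨h, ?_⟩⟩
        have h1 : G.dist w r ≤ q.length := SimpleGraph.dist_le q
        have h2 : q.length + 1 = G.dist v r := by simpa using hp
        omega
  choose w hw using key
  have hinj : Set.InjOn (fun v => s(v, w v)) {v : V | v ≠ r} := by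
    intro a ha b hb hab
    simp only [Sym2.eq_iff] at hab
    rcases hab with ⟨h1, _⟩ | ⟨h1, h2⟩
    · exact h1
    · exfalso
      have h3 := (hw a ha).2
      have h4 := (hw b hb).2
      rw [h2] at h3
      rw [← h1] at h4
      omega
  have hmaps : ∀ a ∈ {v : V | v ≠ r}, s(a, w a) ∈ G.edgeSet := by
    intro a ha
    exact (G.mem_edgeSet).mpr (hw a ha).1
  have hcard := Set.ncard_le_ncard_of_injOn _ hmaps hinj (Set.toFinite _)
  have hself : ({v : V | v ≠ r}).ncard + 1 = Nat.card V := by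
    have : {v : V | v ≠ r} = {r}ᶜ := by ext z; simp [Set.mem_compl_iff]
    rw [this]
    have := Set.ncard_add_ncard_compl ({r} : Set V)
    simp only [Set.ncard_singleton] at this
    omega
  omega

/-- A connected graph with `#edges + 1 = card V` is a tree. -/
lemma isTree_of_connected_of_ncard {V : Type*} [Finite V] (G : SimpleGraph V)
    (hc : G.Connected) (hcard : G.edgeSet.ncard + 1 = Nat.card V) : G.IsTree := by
  classical
  refine ⟨hc, ?_⟩
  rw [SimpleGraph.isAcyclic_iff_forall_adj_isBridge]
  intro v w hadj
  by_contra hbr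
  rw [SimpleGraph.isBridge_iff] at hbr
  have hreach : (G \ fromEdgeSet {s(v, w)}).Reachable v w := by
    by_contra h
    exact hbr h
  set G' := G \ fromEdgeSet {s(v, w)} with hG'
  have hadj' : ∀ a b : V, G.Adj a b → G'.Reachable a b := by
    intro a b hab
    by_cases he : s(a, b) = s(v, w)
    · rw [Sym2.eq_iff] at he
      rcases he with ⟨rfl, rfl⟩ | ⟨rfl, rfl⟩
      · exact hreach
      · exact hreach.symm
    · refine SimpleGraph.Adj.reachable ?_
      rw [hG', SimpleGraph.sdiff_adj]
      refine ⟨hab, ?_⟩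
      rw [SimpleGraph.fromEdgeSet_adj]
      rintro ⟨hmem, -⟩
      exact he (Set.mem_singleton_iff.mp hmem)
  have hc' : G'.Connected := by
    rw [SimpleGraph.connected_iff_exists_forall_reachable]
    exact ⟨v, fun z => reachable_of_adj_reachable hadj' v z (hc.preconnected v z)⟩
  have hsub : G'.edgeSet ⊆ G.edgeSet := SimpleGraph.edgeSet_mono sdiff_le
  have hnot : s(v, w) ∉ G'.edgeSet := by
    rw [SimpleGraph.mem_edgeSet, hG', SimpleGraph.sdiff_adj]
    rintro ⟨-, hmm⟩
    rw [SimpleGraph.fromEdgeSet_adj] at hmm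
    exact hmm ⟨rfl, hadj.ne⟩
  have hssub : G'.edgeSet ⊂ G.edgeSet :=
    ⟨hsub, fun hss => hnot (hss ((G.mem_edgeSet).mpr hadj))⟩
  have hlt : G'.edgeSet.ncard < G.edgeSet.ncard :=
    Set.ncard_lt_ncard hssub (Set.toFinite _)
  have := card_le_ncard_edgeSet_add_one G' hc'
  omega

end IGraphAux

open SimpleGraph

namespace IGraphAux

variable {n : ℕ}

/-- A cyclic window of length `m` starting at `a` in `ZMod n`. -/
def Wnd (a : ZMod n) (m : ℕ) : Set (ZMod n) := {z | ∃ j : ℕ, j < m ∧ z = a + (j : ZMod n)}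

lemma mem_Wnd {a z : ZMod n} {m : ℕ} : z ∈ Wnd a m ↔ ∃ j : ℕ, j < m ∧ z = a + (j : ZMod n) :=
  Iff.rfl

lemma natCast_injOn_lt [NeZero n] {i j : ℕ} (hi : i < n) (hj : j < n)
    (h : (i : ZMod n) = (j : ZMod n)) : i = j := by
  have := congrArg ZMod.val h
  rwa [ZMod.val_cast_of_lt hi, ZMod.val_cast_of_lt hj] at this

lemma natCast_ne_zero_of_lt [NeZero n] {i : ℕ} (h1 : 1 ≤ i) (h2 : i < n) :
    (i : ZMod n) ≠ 0 := by
  intro h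
  have := (ZMod.natCast_eq_zero_iff i n).mp h
  have := Nat.le_of_dvd (by omega) this
  omega

lemma ncard_Wnd [NeZero n] (a : ZMod n) {m : ℕ} (hm : m ≤ n) : (Wnd a m).ncard = m := by
  have : Wnd a m = (fun j : ℕ => a + (j : ZMod n)) '' ↑(Finset.range m) := by
    ext z
    simp only [Wnd, Set.mem_setOf_eq, Set.mem_image, Finset.coe_range, Set.mem_Iio]
    constructor
    · rintro ⟨j, hj, rfl⟩; exact ⟨j, hj, rfl⟩
    · rintro ⟨j, hj, rfl⟩; exact ⟨j, hj, rfl⟩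
  rw [this, Set.ncard_image_of_injOn, Set.ncard_coe_finset, Finset.card_range]
  intro i hi j hj hij
  simp only [Finset.coe_range, Set.mem_Iio] at hi hj
  exact natCast_injOn_lt (lt_of_lt_of_le hi hm) (lt_of_lt_of_le hj hm) (by
    have := hij
    simpa using this)

lemma Wnd_start_eq [NeZero n] {a b : ZMod n} {m : ℕ} (hm1 : 1 ≤ m) (hmn : m < n)
    (h : Wnd a m = Wnd b m) : a = b := by
  have hb : b ∈ Wnd a m := by
    rw [h]; exact ⟨0, by omega, by simp⟩
  obtain ⟨j, hj, rfl⟩ := hb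
  rcases Nat.eq_zero_or_pos j with rfl | hjpos
  · simp
  · exfalso
    have hmem : a + ((j - 1 : ℕ) : ZMod n) ∈ Wnd a m := ⟨j - 1, by omega, rfl⟩
    rw [h] at hmem
    obtain ⟨i, hi, hieq⟩ := hmem
    -- a + (j-1) = a + j + i  =>  (i + 1 : ZMod n) = 0
    have : ((j - 1 : ℕ) : ZMod n) = (j : ZMod n) + (i : ZMod n) := by
      have := hieq
      rwa [add_assoc, add_right_inj] at this
    have h2 : ((j - 1 + 1 + i : ℕ) : ZMod n) = ((j - 1 : ℕ) : ZMod n) + 1 + i := by push_cast; ring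
    have h3 : ((j - 1 + 1 + i : ℕ) : ZMod n) = ((j - 1 : ℕ) : ZMod n) + 1 + i := h2
    -- from this : (j-1) = j + i, we get 0 = 1 + i i.e. (i+1) = 0
    have h4 : ((i + 1 : ℕ) : ZMod n) = 0 := by
      have hj' : ((j : ℕ) : ZMod n) = ((j - 1 : ℕ) : ZMod n) + 1 := by
        have : (j - 1) + 1 = j := by omega
        rw [← this]; push_cast; ring
      rw [hj'] at this
      have : (0 : ZMod n) = 1 + (i : ZMod n) := by
        have := this
        nth_rewrite 1 [show ((j-1:ℕ) : ZMod n) = ((j-1:ℕ) : ZMod n) + 0 by ring] at this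
        rwa [add_assoc, add_right_inj] at this
      push_cast
      rw [add_comm]
      exact this.symm
    have := (ZMod.natCast_eq_zero_iff (i + 1) n).mp h4
    have := Nat.le_of_dvd (by omega) this
    omega

section Reach

variable [NeZero n] {V' : Type*} {G : SimpleGraph V'}

/-- Generic lemma: if all step-`st` edges outside a gcd-window are present (through an
injection `ι` of `ZMod n` into the vertices), then any two vertices whose indices are
congruent mod `gcd n st` are reachable from one another. -/
lemma reach_class (ι : ZMod n → V') (st : ℕ) (x : ZMod n)
    (hst1 : 1 ≤ st) (hstn : st < n)
    (hAdj : ∀ a : ZMod n, a ∉ Wnd x (Nat.gcd n st) → G.Adj (ι a) (ι (a + (st : ZMod n))))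
    {a b : ZMod n}
    (hab : (ZMod.castHom (Nat.gcd_dvd_left n st) (ZMod (Nat.gcd n st))) a =
           (ZMod.castHom (Nat.gcd_dvd_left n st) (ZMod (Nat.gcd n st))) b) :
    G.Reachable (ι a) (ι b) := by
  have hn0 : 0 < n := Nat.pos_of_ne_zero (NeZero.ne n)
  set g := Nat.gcd n st with hg
  set π := ZMod.castHom (Nat.gcd_dvd_left n st) (ZMod g) with hπ
  have hg0 : 0 < g := Nat.gcd_pos_of_pos_left st hn0
  have hgn : g ∣ n := Nat.gcd_dvd_left n st
  have hgst : g ∣ st := Nat.gcd_dvd_right n st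
  haveI : NeZero g := ⟨by omega⟩
  set n₁ := n / g with hn₁
  have hnn₁ : n = g * n₁ := by
    rw [hn₁, Nat.mul_div_cancel' hgn]
  have hn₁pos : 0 < n₁ := by
    rcases Nat.eq_zero_or_pos n₁ with h | h
    · rw [h, Nat.mul_zero] at hnn₁; omega
    · exact h
  set s₁ := st / g with hs₁
  have hsts₁ : st = g * s₁ := by rw [hs₁, Nat.mul_div_cancel' hgst]
  have hcop₁ : Nat.Coprime n₁ s₁ := Nat.coprime_div_gcd_div_gcd (by rw [← hg]; exact hg0)
  -- `π` of a natCast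
  have hπnat : ∀ j : ℕ, π ((j : ZMod n)) = (j : ZMod g) := fun j => map_natCast π j
  have hπval : ∀ c : ZMod n, π c = ((c.val : ℕ) : ZMod g) := by
    intro c
    conv_lhs => rw [← ZMod.natCast_rightInverse c]
    exact hπnat c.val
  -- the distinguished window element in the class of `a`
  set J := (a - x).val % g with hJ
  have hJlt : J < g := Nat.mod_lt _ hg0
  set q := x + (J : ZMod n) with hq
  have hπq : π q = π a := by
    rw [hq, map_add, hπnat]
    have : ((J : ℕ) : ZMod g) = (((a - x).val : ℕ) : ZMod g) := by
      rw [hJ, ZMod.natCast_mod]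
    rw [this, ← hπval, map_sub]
    ring
  have hqmem : q ∈ Wnd x g := ⟨J, hJlt, rfl⟩
  -- uniqueness: the only window element whose class is that of `q` is `q`
  have huniq : ∀ z ∈ Wnd x g, π z = π q → z = q := by
    rintro z ⟨j, hj, rfl⟩ hz
    rw [hq, map_add, map_add, hπnat, hπnat] at hz
    have : (j : ZMod g) = (J : ZMod g) := by
      have := hz
      rwa [add_right_inj] at this
    have := natCast_injOn_lt (n := g) hj hJlt this
    rw [this]
  -- division: n ∣ t * st → n₁ ∣ t
  have hdvd : ∀ t : ℕ, (n : ℕ) ∣ t * st → n₁ ∣ t := by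
    intro t ht
    rw [hnn₁, hsts₁] at ht
    have : n₁ ∣ t * s₁ := by
      rcases ht with ⟨c, hc⟩
      refine ⟨c, ?_⟩
      have : g * (t * s₁) = g * (n₁ * c) := by ring_nf; ring_nf at hc; linarith [hc]
      exact Nat.eq_of_mul_eq_mul_left hg0 this
    exact (Nat.Coprime.dvd_of_dvd_mul_right hcop₁ this)
  -- representation: any c in the class of q equals q + t*st, 1 ≤ t ≤ n₁
  have hrep : ∀ c : ZMod n, π c = π q → ∃ t : ℕ, 1 ≤ t ∧ t ≤ n₁ ∧
      c = q + (t : ZMod n) * (st : ZMod n) := by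
    intro c hc
    have h0 : π (c - q) = 0 := by rw [map_sub, hc, sub_self]
    have h1 : (((c - q).val : ℕ) : ZMod g) = 0 := by rw [← hπval]; exact h0
    have h2 : g ∣ (c - q).val := (ZMod.natCast_eq_zero_iff _ _).mp h1
    obtain ⟨m, hm⟩ := h2
    -- Bezout
    have hbez : ((g : ℕ) : ZMod n) = (st : ZMod n) * ((Nat.gcdB n st : ℤ) : ZMod n) := by
      have h3 : ((g : ℕ) : ℤ) = n * Nat.gcdA n st + st * Nat.gcdB n st := Nat.gcd_eq_gcd_ab n st
      have h4 := congrArg (fun z : ℤ => (z : ZMod n)) h3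
      push_cast at h4
      rw [ZMod.natCast_self] at h4
      simpa using h4
    have hcq : c - q = (st : ZMod n) * (((Nat.gcdB n st : ℤ) : ZMod n) * (m : ZMod n)) := by
      have : c - q = (((c - q).val : ℕ) : ZMod n) := (ZMod.natCast_rightInverse _).symm
      rw [this, hm]
      push_cast
      rw [hbez]
      ring
    set z : ZMod n := ((Nat.gcdB n st : ℤ) : ZMod n) * (m : ZMod n) with hz
    set t₀ := z.val % n₁ with ht₀
    have hstep : ∀ r : ℕ, ((n₁ * r * st : ℕ) : ZMod n) = 0 := by
      intro r
      have : (n : ℕ) ∣ n₁ * r * st := by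
        rw [hnn₁, hsts₁]
        exact ⟨r * s₁, by ring⟩
      exact (ZMod.natCast_eq_zero_iff _ _).mpr this
    have hzdecomp : z.val = n₁ * (z.val / n₁) + t₀ := (Nat.div_add_mod _ _).symm
    by_cases h5 : t₀ = 0
    · refine ⟨n₁, hn₁pos, le_refl _, ?_⟩
      have hzst : z * (st : ZMod n) = 0 := by
        have : z = ((z.val : ℕ) : ZMod n) := (ZMod.natCast_rightInverse _).symm
        rw [this]
        have : ((z.val : ℕ) : ZMod n) * (st : ZMod n) = ((z.val * st : ℕ) : ZMod n) := by push_cast; ring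
        rw [this]
        rw [hzdecomp, h5, Nat.add_zero]
        exact hstep (z.val / n₁)
      have hnst : ((n₁ : ℕ) : ZMod n) * (st : ZMod n) = 0 := by
        have h9 := hstep 1
        rw [Nat.mul_one] at h9
        push_cast at h9 ⊢
        exact h9
      have hc0 : c - q = 0 := by rw [hcq, mul_comm, hzst]
      have hceq : c = q := by rwa [sub_eq_zero] at hc0
      rw [hceq, hnst, add_zero]
    · refine ⟨t₀, by omega, le_of_lt (Nat.mod_lt _ hn₁pos), ?_⟩
      have hzv : z = ((z.val : ℕ) : ZMod n) := (ZMod.natCast_rightInverse _).symm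
      have hmuldist : (n₁ * (z.val / n₁) + t₀) * st = n₁ * (z.val / n₁) * st + t₀ * st := by
        ring
      have key : ((z.val * st : ℕ) : ZMod n) = ((t₀ * st : ℕ) : ZMod n) := by
        conv_lhs => rw [hzdecomp, hmuldist]
        rw [Nat.cast_add, hstep, zero_add]
      have hthis : z * (st : ZMod n) = ((t₀ : ℕ) : ZMod n) * (st : ZMod n) := by
        calc z * (st : ZMod n) = ((z.val * st : ℕ) : ZMod n) := by
              rw [Nat.cast_mul, ← hzv]
        _ = ((t₀ * st : ℕ) : ZMod n) := key
        _ = ((t₀ : ℕ) : ZMod n) * (st : ZMod n) := by rw [Nat.cast_mul]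
      have hfin : c - q = ((t₀ : ℕ) : ZMod n) * (st : ZMod n) := by
        rw [hcq, mul_comm]; exact hthis
      rw [sub_eq_iff_eq_add'] at hfin
      exact hfin
  -- the chain of edges
  have hchain : ∀ t : ℕ, 1 ≤ t → t ≤ n₁ →
      G.Reachable (ι (q + (st : ZMod n))) (ι (q + (t : ZMod n) * (st : ZMod n))) := by
    intro t
    induction t with
    | zero => omega
    | succ t ih =>
      intro _ hle
      rcases Nat.eq_zero_or_pos t with rfl | ht
      · simp only [Nat.zero_add, Nat.cast_one, one_mul]
        exact SimpleGraph.Reachable.refl _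
      · have hreach := ih ht (by omega)
        have hnot : q + (t : ZMod n) * (st : ZMod n) ∉ Wnd x g := by
          intro hmem
          have hπt : π (q + (t : ZMod n) * (st : ZMod n)) = π q := by
            rw [map_add, map_mul, hπnat, hπnat]
            rw [show ((st : ℕ) : ZMod g) = 0 from (ZMod.natCast_eq_zero_iff _ _).mpr hgst]
            ring
          have := huniq _ hmem hπt
          have h6 : ((t * st : ℕ) : ZMod n) = 0 := by
            have h7 : (t : ZMod n) * (st : ZMod n) = 0 := by
              have h8 := congrArg (fun w => w - q) this
              simpa using h8
            push_cast
            exact h7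
          have := hdvd t ((ZMod.natCast_eq_zero_iff _ _).mp h6)
          have := Nat.le_of_dvd ht this
          omega
        have hedge := hAdj _ hnot
        have : q + ((t + 1 : ℕ) : ZMod n) * (st : ZMod n) =
            q + (t : ZMod n) * (st : ZMod n) + (st : ZMod n) := by push_cast; ring
        rw [this]
        exact hreach.trans hedge.reachable
  -- conclude
  obtain ⟨ta, hta1, hta2, hta⟩ := hrep a hπq.symm
  obtain ⟨tb, htb1, htb2, htb⟩ := hrep b (by rw [← hab]; exact hπq.symm)
  rw [hta, htb]
  exact (hchain ta hta1 hta2).symm.trans (hchain tb htb1 htb2)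

end Reach

end IGraphAux

namespace IGraphAux

/-- Connectivity of the "window index graph": on `{0, …, d+e-2}` with moves that preserve
residue mod `d` or mod `e`, everything is reachable from `0` when `gcd d e = 1`. -/
lemma index_connect (d e : ℕ) (hd : 1 ≤ d) (he : 1 ≤ e) (hde : Nat.gcd d e = 1)
    (P : ℕ → Prop) (h0 : P 0)
    (hstep : ∀ s t : ℕ, s < d + e - 1 → t < d + e - 1 → P s →
      (s % d = t % d ∨ s % e = t % e) → P t) :
    ∀ s, s < d + e - 1 → P s := by
  rcases Nat.eq_or_lt_of_le hd with hd1 | hd2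
  · -- d = 1
    intro s hs
    refine hstep 0 s (by omega) hs h0 (Or.inl ?_)
    rw [← hd1]
    omega
  rcases Nat.eq_or_lt_of_le he with he1 | he2
  · -- e = 1
    intro s hs
    refine hstep 0 s (by omega) hs h0 (Or.inr ?_)
    rw [← he1]
    omega
  -- now d, e ≥ 2
  set N := d + e with hN
  have hN4 : 4 ≤ N := by omega
  set x : ℕ → ℕ := fun t => (t * d) % N with hx
  have hxlt : ∀ t, x t < N := fun t => Nat.mod_lt _ (by omega)
  have hx0 : x 0 = 0 := by simp [hx]
  have hxsucc : ∀ t, (x t < e ∧ x (t + 1) = x t + d) ∨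
      (e ≤ x t ∧ x (t + 1) = x t + d - N) := by
    intro t
    have h1 : x (t + 1) = (x t + d) % N := by
      simp only [hx]
      rw [Nat.add_mul, Nat.one_mul, Nat.add_mod (t * d) d N,
        Nat.mod_eq_of_lt (show d < N by omega)]
    by_cases h2 : x t < e
    · left
      refine ⟨h2, ?_⟩
      rw [h1, Nat.mod_eq_of_lt (by omega)]
    · right
      refine ⟨by omega, ?_⟩
      have h3 : x t + d < 2 * N := by have := hxlt t; omega
      have h4 : N ≤ x t + d := by omega
      rw [h1, Nat.mod_eq_sub_mod h4, Nat.mod_eq_of_lt (by have := hxlt t; omega)]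
  have hgcdNd : Nat.gcd N d = 1 := by
    rw [hN, Nat.add_comm, Nat.gcd_comm]
    rw [Nat.gcd_add_self_right]
    exact hde
  have hinj : ∀ t t', t < N → t' < N → x t = x t' → t = t' := by
    intro t t' ht ht' hxx
    have h1 : t * d ≡ t' * d [MOD N] := by
      unfold Nat.ModEq
      rw [hx] at hxx
      exact hxx
    have h2 : t ≡ t' [MOD N] := Nat.ModEq.cancel_right_of_coprime hgcdNd h1
    unfold Nat.ModEq at h2
    rwa [Nat.mod_eq_of_lt ht, Nat.mod_eq_of_lt ht'] at h2
  have hsurj : ∀ s, s < N → ∃ t, t < N ∧ x t = s := by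
    intro s hs
    have hf : Function.Injective (fun t : Fin N => (⟨x t, hxlt t⟩ : Fin N)) := by
      intro t t' htt
      have := hinj t t' t.isLt t'.isLt (by simpa using congrArg Fin.val htt)
      exact Fin.ext this
    have hfs : Function.Surjective (fun t : Fin N => (⟨x t, hxlt t⟩ : Fin N)) :=
      Finite.surjective_of_injective hf
    obtain ⟨t, ht⟩ := hfs ⟨s, hs⟩
    exact ⟨t.val, t.isLt, by simpa using congrArg Fin.val ht⟩
  obtain ⟨T, hTN, hT⟩ := hsurj (N - 1) (by omega)
  have hT0 : T ≠ 0 := by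
    intro h
    rw [h, hx0] at hT
    omega
  have hne : ∀ t, t < N → t ≠ T → x t < N - 1 := by
    intro t ht htT
    have h1 := hxlt t
    rcases Nat.lt_or_ge (x t) (N - 1) with h | h
    · exact h
    · exfalso
      have : x t = N - 1 := by omega
      exact htT (hinj t T ht hTN (by rw [this, hT]))
  -- relation between x t and x (t+1)
  have hrel : ∀ t, x t % d = x (t + 1) % d ∨ x t % e = x (t + 1) % e := by
    intro t
    rcases hxsucc t with ⟨h1, h2⟩ | ⟨h1, h2⟩
    · left; rw [h2, Nat.add_mod_right]
    · right
      rw [h2]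
      have h3 : x t + d - N = x t - e := by omega
      rw [h3]
      have h4 : x t = (x t - e) + e := by omega
      conv_lhs => rw [h4]
      rw [Nat.add_mod_right]
  -- ascending part: all x t for t < T
  have hA : ∀ t, t < T → P (x t) := by
    intro t
    induction t with
    | zero => intro _; rw [hx0]; exact h0
    | succ t ih =>
      intro hlt
      have hPt := ih (by omega)
      exact hstep (x t) (x (t + 1))
        (hne t (by omega) (by omega))
        (hne (t + 1) (by omega) (by omega))
        hPt (hrel t)
  -- descending part
  have hxN1 : x (N - 1) = e := by
    have hxN : x N = 0 := by
      rw [hx]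
      simp
    have hsub : N - 1 + 1 = N := by omega
    rcases hxsucc (N - 1) with ⟨h1, h2⟩ | ⟨h1, h2⟩
    · rw [hsub] at h2
      rw [hxN] at h2
      omega
    · rw [hsub] at h2
      rw [hxN] at h2
      have := hxlt (N - 1)
      omega
  have hB : ∀ j, j ≤ N - 1 - (T + 1) → P (x (N - 1 - j)) := by
    intro j
    induction j with
    | zero =>
      intro _
      rw [Nat.sub_zero, hxN1]
      refine hstep 0 e (by omega) (by omega) h0 (Or.inr ?_)
      simp [Nat.mod_self, Nat.zero_mod]
    | succ j ih =>
      intro hle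
      have hPt := ih (by omega)
      have ht : N - 1 - (j + 1) + 1 = N - 1 - j := by omega
      have hTlt : T < N - 1 - (j + 1) := by omega
      refine hstep (x (N - 1 - j)) (x (N - 1 - (j + 1)))
        (hne _ (by omega) (by omega))
        (hne _ (by omega) (by omega))
        hPt ?_
      have := hrel (N - 1 - (j + 1))
      rw [ht] at this
      tauto
  -- conclude
  intro s hs
  obtain ⟨t, htN, hxt⟩ := hsurj s (by omega)
  have htT : t ≠ T := by
    intro h
    rw [h, hT] at hxt
    omega
  rcases Nat.lt_or_ge t T with h | h
  · rw [← hxt]; exact hA t h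
  · have h1 : t = N - 1 - (N - 1 - t) := by omega
    rw [← hxt, h1]
    exact hB (N - 1 - t) (by omega)

end IGraphAux

open SimpleGraph

namespace IGraphAux

variable {n : ℕ}

lemma castHom_val {n g : ℕ} [NeZero n] (h : g ∣ n) (c : ZMod n) :
    (ZMod.castHom h (ZMod g)) c = ((c.val : ℕ) : ZMod g) := by
  conv_lhs => rw [← ZMod.natCast_rightInverse c]
  exact map_natCast _ c.val

/-- Relation generating the spanning tree `T(x,y,p)` inside `I(n,k,l)`:
outer edges except a window of `gcd n l` starting at `y`, inner edges except a window
of `gcd n k` starting at `x`, and spokes on a window of `gcd n k + gcd n l - 1`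
starting at `p`. -/
def TRel (n k l : ℕ) (x y p : ZMod n) : (ZMod n ⊕ ZMod n) → (ZMod n ⊕ ZMod n) → Prop
  | .inl a, .inl b => b = a + (l : ZMod n) ∧ a ∉ Wnd y (Nat.gcd n l)
  | .inr a, .inr b => b = a + (k : ZMod n) ∧ a ∉ Wnd x (Nat.gcd n k)
  | .inl a, .inr b => a = b ∧ a ∈ Wnd p (Nat.gcd n k + Nat.gcd n l - 1)
  | .inr _, .inl _ => False

/-- The spanning tree graph `T(x,y,p)`. -/
def TreeG (n k l : ℕ) (x y p : ZMod n) : SimpleGraph (ZMod n ⊕ ZMod n) :=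
  SimpleGraph.fromRel (TRel n k l x y p)

section TreeLemmas

variable {k l : ℕ} {x y p : ZMod n}

lemma treeG_le (hk1 : 1 ≤ k) (hkl : k ≤ l) (hn : 2 * l < n) :
    TreeG n k l x y p ≤ IGraph n k l := by
  intro a b hab
  rw [TreeG, SimpleGraph.fromRel_adj] at hab
  obtain ⟨hne, hr⟩ := hab
  rw [IGraph, SimpleGraph.fromRel_adj]
  refine ⟨hne, ?_⟩
  rcases a with a | a <;> rcases b with b | b <;>
    simp only [TRel, IRel] at hr ⊢ <;> tauto

section WithNeZero

variable [NeZero n]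

lemma cast_k_ne (hk1 : 1 ≤ k) (hkl : k ≤ l) (hn : 2 * l < n) : (k : ZMod n) ≠ 0 :=
  natCast_ne_zero_of_lt hk1 (by omega)

lemma cast_l_ne (hk1 : 1 ≤ k) (hkl : k ≤ l) (hn : 2 * l < n) : (l : ZMod n) ≠ 0 :=
  natCast_ne_zero_of_lt (by omega) (by omega)

lemma adj_spoke_iff {a b : ZMod n} :
    (TreeG n k l x y p).Adj (Sum.inl a) (Sum.inr b) ↔
      a = b ∧ a ∈ Wnd p (Nat.gcd n k + Nat.gcd n l - 1) := by
  rw [TreeG, SimpleGraph.fromRel_adj]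
  constructor
  · rintro ⟨-, h | h⟩
    · exact h
    · exact absurd h (by simp [TRel])
  · rintro ⟨rfl, hm⟩
    exact ⟨by simp, Or.inl ⟨rfl, hm⟩⟩

lemma adj_inner_iff (hk1 : 1 ≤ k) (hkl : k ≤ l) (hn : 2 * l < n) {a b : ZMod n} :
    (TreeG n k l x y p).Adj (Sum.inr a) (Sum.inr b) ↔
      ((b = a + (k : ZMod n) ∧ a ∉ Wnd x (Nat.gcd n k)) ∨
       (a = b + (k : ZMod n) ∧ b ∉ Wnd x (Nat.gcd n k))) := by
  rw [TreeG, SimpleGraph.fromRel_adj]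
  constructor
  · rintro ⟨-, h | h⟩
    · exact Or.inl h
    · exact Or.inr h
  · intro h
    have hkz : (k : ZMod n) ≠ 0 := cast_k_ne hk1 hkl hn
    refine ⟨?_, by tauto⟩
    rcases h with ⟨rfl, -⟩ | ⟨rfl, -⟩
    · intro hcon
      rw [Sum.inr.injEq] at hcon
      exact hkz (by linear_combination - hcon)
    · intro hcon
      rw [Sum.inr.injEq] at hcon
      exact hkz (by linear_combination hcon)

lemma adj_outer_iff (hk1 : 1 ≤ k) (hkl : k ≤ l) (hn : 2 * l < n) {a b : ZMod n} :
    (TreeG n k l x y p).Adj (Sum.inl a) (Sum.inl b) ↔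
      ((b = a + (l : ZMod n) ∧ a ∉ Wnd y (Nat.gcd n l)) ∨
       (a = b + (l : ZMod n) ∧ b ∉ Wnd y (Nat.gcd n l))) := by
  rw [TreeG, SimpleGraph.fromRel_adj]
  constructor
  · rintro ⟨-, h | h⟩
    · exact Or.inl h
    · exact Or.inr h
  · intro h
    have hlz : (l : ZMod n) ≠ 0 := cast_l_ne hk1 hkl hn
    refine ⟨?_, by tauto⟩
    rcases h with ⟨rfl, -⟩ | ⟨rfl, -⟩
    · intro hcon
      rw [Sum.inl.injEq] at hcon
      exact hlz (by linear_combination - hcon)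
    · intro hcon
      rw [Sum.inl.injEq] at hcon
      exact hlz (by linear_combination hcon)

lemma treeG_connected (hk1 : 1 ≤ k) (hkl : k ≤ l) (hn : 2 * l < n)
    (hcop : Nat.gcd k l = 1) : (TreeG n k l x y p).Connected := by
  have hn0 : 0 < n := by omega
  set d := Nat.gcd n k with hd
  set e := Nat.gcd n l with he
  have hd1 : 1 ≤ d := Nat.gcd_pos_of_pos_left _ hn0
  have he1 : 1 ≤ e := Nat.gcd_pos_of_pos_left _ hn0
  have hdk : d ∣ k := Nat.gcd_dvd_right n k
  have hel : e ∣ l := Nat.gcd_dvd_right n l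
  have hdn : d ∣ n := Nat.gcd_dvd_left n k
  have hen : e ∣ n := Nat.gcd_dvd_left n l
  have hdle : d ≤ k := Nat.le_of_dvd (by omega) hdk
  have hele : e ≤ l := Nat.le_of_dvd (by omega) hel
  have hde : Nat.gcd d e = 1 := by
    have h1 : Nat.Coprime k e := Nat.Coprime.coprime_dvd_right hel hcop
    exact Nat.Coprime.coprime_dvd_left hdk h1
  set m := d + e - 1 with hm
  have hmn : m < n := by omega
  set T := TreeG n k l x y p with hT
  -- inner reachability within classes mod d
  have hreachIn : ∀ a b : ZMod n,
      (ZMod.castHom hdn (ZMod d)) a = (ZMod.castHom hdn (ZMod d)) b →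
      T.Reachable (Sum.inr a) (Sum.inr b) := by
    intro a b hab
    refine reach_class Sum.inr k x hk1 (by omega) ?_ hab
    intro c hc
    rw [hT, adj_inner_iff hk1 hkl hn]
    exact Or.inl ⟨rfl, hc⟩
  have hreachOut : ∀ a b : ZMod n,
      (ZMod.castHom hen (ZMod e)) a = (ZMod.castHom hen (ZMod e)) b →
      T.Reachable (Sum.inl a) (Sum.inl b) := by
    intro a b hab
    refine reach_class Sum.inl l y (by omega) (by omega) ?_ hab
    intro c hc
    rw [hT, adj_outer_iff hk1 hkl hn]
    exact Or.inl ⟨rfl, hc⟩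
  have hspoke : ∀ a : ZMod n, a ∈ Wnd p m → T.Adj (Sum.inl a) (Sum.inr a) := by
    intro a ha
    rw [hT, adj_spoke_iff]
    exact ⟨rfl, ha⟩
  -- congruence helper
  have hcongr : ∀ (g : ℕ) (hg : g ∣ n) (s t : ℕ), s % g = t % g →
      (ZMod.castHom hg (ZMod g)) (p + (s : ZMod n)) =
      (ZMod.castHom hg (ZMod g)) (p + (t : ZMod n)) := by
    intro g hg s t hst
    rw [map_add, map_add, map_natCast, map_natCast]
    congr 1
    rw [← ZMod.natCast_mod s g, ← ZMod.natCast_mod t g, hst]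
  -- the window indices are all reachable from the root
  set P : ℕ → Prop := fun s => T.Reachable (Sum.inr p) (Sum.inr (p + (s : ZMod n))) with hP
  have hP0 : P 0 := by
    rw [hP]
    simp only [Nat.cast_zero, add_zero]
    exact SimpleGraph.Reachable.refl _
  have hPstep : ∀ s t : ℕ, s < d + e - 1 → t < d + e - 1 → P s →
      (s % d = t % d ∨ s % e = t % e) → P t := by
    intro s t hs ht hPs hrel
    rcases hrel with h | h
    · exact hPs.trans (hreachIn _ _ (hcongr d hdn s t h))
    · have h1 : T.Adj (Sum.inl (p + (s : ZMod n))) (Sum.inr (p + (s : ZMod n))) :=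
        hspoke _ ⟨s, by omega, rfl⟩
      have h2 : T.Adj (Sum.inl (p + (t : ZMod n))) (Sum.inr (p + (t : ZMod n))) :=
        hspoke _ ⟨t, by omega, rfl⟩
      exact hPs.trans (h1.reachable.symm.trans
        ((hreachOut _ _ (hcongr e hen s t h)).trans h2.reachable))
  have hPall : ∀ s, s < d + e - 1 → P s := index_connect d e hd1 he1 hde P hP0 hPstep
  -- all vertices reachable from the root
  rw [SimpleGraph.connected_iff_exists_forall_reachable]
  refine ⟨Sum.inr p, ?_⟩
  intro w
  rcases w with c | c
  · -- outer vertex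
    set s := (c - p).val % e with hs
    have hse : s < e := Nat.mod_lt _ he1
    have hcg : (ZMod.castHom hen (ZMod e)) (p + (s : ZMod n)) =
        (ZMod.castHom hen (ZMod e)) c := by
      rw [map_add, map_natCast, hs, ZMod.natCast_mod, ← castHom_val hen (c - p), map_sub]
      ring
    have h3 := hreachOut _ _ hcg
    have h4 : T.Adj (Sum.inl (p + (s : ZMod n))) (Sum.inr (p + (s : ZMod n))) :=
      hspoke _ ⟨s, by omega, rfl⟩
    have h5 : P s := hPall s (by omega)
    exact (h5.trans (h4.reachable.symm.trans h3)).symm.symm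
  · -- inner vertex
    set s := (c - p).val % d with hs
    have hsd : s < d := Nat.mod_lt _ hd1
    have hcg : (ZMod.castHom hdn (ZMod d)) (p + (s : ZMod n)) =
        (ZMod.castHom hdn (ZMod d)) c := by
      rw [map_add, map_natCast, hs, ZMod.natCast_mod, ← castHom_val hdn (c - p), map_sub]
      ring
    have h3 := hreachIn _ _ hcg
    have h5 : P s := hPall s (by omega)
    exact h5.trans h3

end WithNeZero

end TreeLemmas

end IGraphAux
namespace IGraphAux

open SimpleGraph

section Count

variable {n k l : ℕ} [NeZero n] {x y p : ZMod n}

lemma treeG_edge_ncard (hk1 : 1 ≤ k) (hkl : k ≤ l) (hn : 2 * l < n) :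
    (TreeG n k l x y p).edgeSet.ncard + 1 = 2 * n := by
  have hn0 : 0 < n := by omega
  set d := Nat.gcd n k with hd
  set e := Nat.gcd n l with he
  have hd1 : 1 ≤ d := Nat.gcd_pos_of_pos_left _ hn0
  have he1 : 1 ≤ e := Nat.gcd_pos_of_pos_left _ hn0
  have hdle : d ≤ k := Nat.le_of_dvd (by omega) (Nat.gcd_dvd_right n k)
  have hele : e ≤ l := Nat.le_of_dvd (by omega) (Nat.gcd_dvd_right n l)
  set S1 : Set (Sym2 (ZMod n ⊕ ZMod n)) :=
    (fun a : ZMod n => s(Sum.inl a, Sum.inl (a + (l : ZMod n)))) '' (Wnd y e)ᶜ with hS1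
  set S2 : Set (Sym2 (ZMod n ⊕ ZMod n)) :=
    (fun a : ZMod n => s(Sum.inr a, Sum.inr (a + (k : ZMod n)))) '' (Wnd x d)ᶜ with hS2
  set S3 : Set (Sym2 (ZMod n ⊕ ZMod n)) :=
    (fun a : ZMod n => s(Sum.inl a, Sum.inr a)) '' (Wnd p (d + e - 1)) with hS3
  have hdecomp : (TreeG n k l x y p).edgeSet = S1 ∪ S2 ∪ S3 := by
    apply Set.Subset.antisymm
    · intro z hz
      induction z using Sym2.ind with
      | _ u v =>
        rw [SimpleGraph.mem_edgeSet] at hz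
        rcases u with a | a <;> rcases v with b | b
        · rw [adj_outer_iff hk1 hkl hn] at hz
          rcases hz with ⟨rfl, hm⟩ | ⟨rfl, hm⟩
          · exact Or.inl (Or.inl ⟨a, hm, rfl⟩)
          · exact Or.inl (Or.inl ⟨b, hm, Sym2.eq_swap⟩)
        · rw [adj_spoke_iff] at hz
          obtain ⟨rfl, hm⟩ := hz
          exact Or.inr ⟨a, hm, rfl⟩
        · have hz' := hz.symm
          rw [adj_spoke_iff] at hz'
          obtain ⟨rfl, hm⟩ := hz'
          exact Or.inr ⟨b, hm, Sym2.eq_swap⟩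
        · rw [adj_inner_iff hk1 hkl hn] at hz
          rcases hz with ⟨rfl, hm⟩ | ⟨rfl, hm⟩
          · exact Or.inl (Or.inr ⟨a, hm, rfl⟩)
          · exact Or.inl (Or.inr ⟨b, hm, Sym2.eq_swap⟩)
    · refine Set.union_subset (Set.union_subset ?_ ?_) ?_
      · rintro z ⟨a, hm, rfl⟩
        rw [SimpleGraph.mem_edgeSet, adj_outer_iff hk1 hkl hn]
        exact Or.inl ⟨rfl, hm⟩
      · rintro z ⟨a, hm, rfl⟩
        rw [SimpleGraph.mem_edgeSet, adj_inner_iff hk1 hkl hn]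
        exact Or.inl ⟨rfl, hm⟩
      · rintro z ⟨a, hm, rfl⟩
        rw [SimpleGraph.mem_edgeSet, adj_spoke_iff]
        exact ⟨rfl, hm⟩
  -- cardinalities of the pieces
  have hcards : S1.ncard = n - e ∧ S2.ncard = n - d ∧ S3.ncard = d + e - 1 := by
    refine ⟨?_, ?_, ?_⟩
    · rw [hS1, Set.ncard_image_of_injOn]
      · have hW := Set.ncard_add_ncard_compl (Wnd y e) (Set.toFinite _) (Set.toFinite _)
        rw [ncard_Wnd y (show e ≤ n by omega), Nat.card_zmod] at hW
        omega
      · intro a _ b _ hab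
        rw [Sym2.eq_iff] at hab
        rcases hab with ⟨h1, -⟩ | ⟨h1, h2⟩
        · exact Sum.inl.inj h1
        · exfalso
          rw [Sum.inl.injEq] at h1 h2
          have : ((2 * l : ℕ) : ZMod n) = 0 := by
            push_cast
            linear_combination h2 - h1
          exact natCast_ne_zero_of_lt (by omega) (by omega) this
    · rw [hS2, Set.ncard_image_of_injOn]
      · have hW := Set.ncard_add_ncard_compl (Wnd x d) (Set.toFinite _) (Set.toFinite _)
        rw [ncard_Wnd x (show d ≤ n by omega), Nat.card_zmod] at hW
        omega
      · intro a _ b _ hab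
        rw [Sym2.eq_iff] at hab
        rcases hab with ⟨h1, -⟩ | ⟨h1, h2⟩
        · exact Sum.inr.inj h1
        · exfalso
          rw [Sum.inr.injEq] at h1 h2
          have : ((2 * k : ℕ) : ZMod n) = 0 := by
            push_cast
            linear_combination h2 - h1
          exact natCast_ne_zero_of_lt (by omega) (by omega) this
    · rw [hS3, Set.ncard_image_of_injOn, ncard_Wnd p (by omega)]
      intro a _ b _ hab
      rw [Sym2.eq_iff] at hab
      rcases hab with ⟨h1, -⟩ | ⟨h1, -⟩
      · exact Sum.inl.inj h1
      · exact absurd h1 (by simp)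
  have hd12 : Disjoint S1 S2 := by
    rw [Set.disjoint_left]
    rintro z ⟨a, -, rfl⟩ ⟨b, -, hb⟩
    rw [Sym2.eq_iff] at hb
    rcases hb with ⟨h1, -⟩ | ⟨h1, -⟩ <;> simp at h1
  have hd123 : Disjoint (S1 ∪ S2) S3 := by
    rw [Set.disjoint_left]
    rintro z hz ⟨b, -, hb⟩
    rcases hz with ⟨a, -, rfl⟩ | ⟨a, -, rfl⟩
    · rw [Sym2.eq_iff] at hb
      rcases hb with ⟨-, h2⟩ | ⟨-, h2⟩ <;> simp at h2
    · rw [Sym2.eq_iff] at hb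
      rcases hb with ⟨h1, -⟩ | ⟨h1, -⟩ <;> simp at h1
  rw [hdecomp, Set.ncard_union_eq hd123 (by
      exact Set.Finite.union (Set.toFinite _) (Set.toFinite _)) (Set.toFinite _),
    Set.ncard_union_eq hd12 (Set.toFinite _) (Set.toFinite _)]
  omega

lemma treeG_isTree (hk1 : 1 ≤ k) (hkl : k ≤ l) (hn : 2 * l < n)
    (hcop : Nat.gcd k l = 1) : (TreeG n k l x y p).IsTree := by
  apply isTree_of_connected_of_ncard _ (treeG_connected hk1 hkl hn hcop)
  have h1 := treeG_edge_ncard (x := x) (y := y) (p := p) hk1 hkl hn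
  rw [Nat.card_sum, Nat.card_zmod]
  omega

lemma adj_inner_iff' (hk1 : 1 ≤ k) (hkl : k ≤ l) (hn : 2 * l < n) {a : ZMod n} :
    (TreeG n k l x y p).Adj (Sum.inr a) (Sum.inr (a + (k : ZMod n))) ↔
      a ∉ Wnd x (Nat.gcd n k) := by
  rw [adj_inner_iff hk1 hkl hn]
  constructor
  · rintro (⟨-, h⟩ | ⟨hcon, -⟩)
    · exact h
    · exfalso
      have : ((2 * k : ℕ) : ZMod n) = 0 := by
        push_cast
        linear_combination - hcon
      exact natCast_ne_zero_of_lt (by omega) (by omega) this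
  · intro h
    exact Or.inl ⟨rfl, h⟩

lemma adj_outer_iff' (hk1 : 1 ≤ k) (hkl : k ≤ l) (hn : 2 * l < n) {a : ZMod n} :
    (TreeG n k l x y p).Adj (Sum.inl a) (Sum.inl (a + (l : ZMod n))) ↔
      a ∉ Wnd y (Nat.gcd n l) := by
  rw [adj_outer_iff hk1 hkl hn]
  constructor
  · rintro (⟨-, h⟩ | ⟨hcon, -⟩)
    · exact h
    · exfalso
      have : ((2 * l : ℕ) : ZMod n) = 0 := by
        push_cast
        linear_combination - hcon
      exact natCast_ne_zero_of_lt (by omega) (by omega) this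
  · intro h
    exact Or.inl ⟨rfl, h⟩

lemma treeG_param_inj (hk1 : 1 ≤ k) (hkl : k ≤ l) (hn : 2 * l < n) :
    Function.Injective
      (fun q : ZMod n × ZMod n × ZMod n => TreeG n k l q.1 q.2.1 q.2.2) := by
  have hn0 : 0 < n := by omega
  set d := Nat.gcd n k with hd
  set e := Nat.gcd n l with he
  have hd1 : 1 ≤ d := Nat.gcd_pos_of_pos_left _ hn0
  have he1 : 1 ≤ e := Nat.gcd_pos_of_pos_left _ hn0
  have hdle : d ≤ k := Nat.le_of_dvd (by omega) (Nat.gcd_dvd_right n k)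
  have hele : e ≤ l := Nat.le_of_dvd (by omega) (Nat.gcd_dvd_right n l)
  rintro ⟨x, y, p⟩ ⟨x', y', p'⟩ hEq
  simp only at hEq
  have hAdj : ∀ u v, (TreeG n k l x y p).Adj u v ↔ (TreeG n k l x' y' p').Adj u v :=
    fun u v => by rw [hEq]
  have hp : p = p' := by
    refine Wnd_start_eq (m := d + e - 1) (by omega) (by omega) ?_
    ext a
    have h1 := hAdj (Sum.inl a) (Sum.inr a)
    rw [adj_spoke_iff, adj_spoke_iff] at h1
    constructor
    · intro ha; exact (h1.mp ⟨rfl, ha⟩).2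
    · intro ha; exact (h1.mpr ⟨rfl, ha⟩).2
  have hx : x = x' := by
    refine Wnd_start_eq (m := d) (by omega) (by omega) ?_
    ext a
    have h1 := hAdj (Sum.inr a) (Sum.inr (a + (k : ZMod n)))
    rw [adj_inner_iff' hk1 hkl hn, adj_inner_iff' hk1 hkl hn] at h1
    exact not_iff_not.mp h1
  have hy : y = y' := by
    refine Wnd_start_eq (m := e) (by omega) (by omega) ?_
    ext a
    have h1 := hAdj (Sum.inl a) (Sum.inl (a + (l : ZMod n)))
    rw [adj_outer_iff' hk1 hkl hn, adj_outer_iff' hk1 hkl hn] at h1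
    exact not_iff_not.mp h1
  rw [hx, hy, hp]

end Count

/-- transfer of `IsTree` from a spanning simple graph to the coercion of the
associated subgraph. -/
lemma coe_toSubgraph_isTree {V : Type*} {G H : SimpleGraph V} (hle : H ≤ G)
    (ht : H.IsTree) : (SimpleGraph.toSubgraph H hle).coe.IsTree := by
  let φ : (SimpleGraph.toSubgraph H hle).coe ≃g H := ⟨Equiv.Set.univ V, Iff.rfl⟩
  constructor
  · exact (φ.connected_iff).mpr ht.1
  · intro v c hc
    exact ht.2 (c.map φ.toHom) (hc.map φ.toEquiv.injective)

lemma finite_subgraph {V : Type*} [Finite V] (G : SimpleGraph V) : Finite G.Subgraph := by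
  have hinj : Function.Injective
      (fun H : G.Subgraph => (H.verts, H.Adj)) := by
    intro H1 H2 h
    exact SimpleGraph.Subgraph.ext (congrArg Prod.fst h) (congrArg Prod.snd h)
  exact Finite.of_injective _ hinj

end IGraphAux

/-- The number of spanning trees of the I-graph `I(n,k,l)` is at least `n³`. -/
theorem tau_IGraph_ge_cube (n k l : ℕ)
    (hk : 1 ≤ k) (hkl : k ≤ l) (hn : 2 * l < n) (hcop : Nat.gcd k l = 1) :
    n ^ 3 ≤ tauI n k l := by
  haveI : NeZero n := ⟨by omega⟩
  haveI : Finite (IGraph n k l).Subgraph := IGraphAux.finite_subgraph _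
  set F : ZMod n × ZMod n × ZMod n →
      {H : (IGraph n k l).Subgraph // H.IsSpanning ∧ H.coe.IsTree} := fun q =>
    ⟨SimpleGraph.toSubgraph (IGraphAux.TreeG n k l q.1 q.2.1 q.2.2)
        (IGraphAux.treeG_le hk hkl hn),
      SimpleGraph.toSubgraph.isSpanning _ _,
      IGraphAux.coe_toSubgraph_isTree _ (IGraphAux.treeG_isTree hk hkl hn hcop)⟩ with hF
  have hFinj : Function.Injective F := by
    intro q q' h
    have h1 : (F q).val = (F q').val := congrArg Subtype.val h
    have h2 : (IGraphAux.TreeG n k l q.1 q.2.1 q.2.2).Adj =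
        (IGraphAux.TreeG n k l q'.1 q'.2.1 q'.2.2).Adj :=
      congrArg SimpleGraph.Subgraph.Adj h1
    exact IGraphAux.treeG_param_inj hk hkl hn (SimpleGraph.ext h2)
  calc n ^ 3 = Nat.card (ZMod n × ZMod n × ZMod n) := by
        rw [Nat.card_prod, Nat.card_prod, Nat.card_zmod]
        ring
  _ ≤ Nat.card {H : (IGraph n k l).Subgraph // H.IsSpanning ∧ H.coe.IsTree} :=
        Nat.card_le_card_of_injective F hFinj
  _ = tauI n k l := rfl
end

section
/- Let n, k, l be integers with 1 ≤ k ≤ l and 2l < n, let L be the Laplacian matrix of the I-graph I(n,k,l) regarded as a complex matrix, and set ε_n = exp(2πi/n). Then the characteristic polynomial of L factors in ℂ[X] as char(L)(X) = ∏_{j=0}^{n−1} ((X − 3 + ε_n^{jk} + ε_n^{−jk})(X − 3 + ε_n^{jl} + ε_n^{−jl}) − 1). -/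
open Polynomial

section IGraphCharpolyAux
open Matrix Polynomial

namespace IGraphAux

variable (n k l : ℕ) [NeZero n]

noncomputable def eps : ℂ := Complex.exp (2 * Real.pi * Complex.I / n)

lemma eps_prim : IsPrimitiveRoot (eps n) n := Complex.isPrimitiveRoot_exp n (NeZero.ne n)

lemma eps_pow_n : eps n ^ n = 1 := (eps_prim n).pow_eq_one

noncomputable def eC (a : ZMod n) : ℂ := eps n ^ a.val

lemma eC_natCast (m : ℕ) : eC n (m : ZMod n) = eps n ^ m := by
  rw [eC, ZMod.val_natCast, ← pow_eq_pow_mod m (eps_pow_n n)]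

lemma eC_zero : eC n 0 = 1 := by simpa using eC_natCast n 0

lemma eC_add (a b : ZMod n) : eC n (a + b) = eC n a * eC n b := by
  rw [eC, ZMod.val_add, ← pow_eq_pow_mod _ (eps_pow_n n), pow_add]; rfl

lemma eC_mul_eC_neg (a : ZMod n) : eC n a * eC n (-a) = 1 := by
  rw [← eC_add, add_neg_cancel, eC_zero]

lemma eC_neg (a : ZMod n) : eC n (-a) = (eC n a)⁻¹ :=
  eq_inv_of_mul_eq_one_left (by rw [mul_comm]; exact eC_mul_eC_neg n a)

lemma eC_ne_one {a : ZMod n} (ha : a ≠ 0) : eC n a ≠ 1 :=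
  (eps_prim n).pow_ne_one_of_pos_of_lt
    (fun h => ha (by rwa [← ZMod.val_eq_zero])) a.val_lt

lemma eC_pow (m : ℕ) (c : ZMod n) : eC n ((m : ZMod n) * c) = eC n c ^ m := by
  induction m with
  | zero => simpa using eC_zero n
  | succ m ih => push_cast; rw [add_mul, one_mul, eC_add, ih, pow_succ]

lemma eC_pow_n (c : ZMod n) : eC n c ^ n = 1 := by
  rw [eC, ← pow_mul, mul_comm, pow_mul, eps_pow_n, one_pow]

lemma prod_range_eq_prod_zmod {M : Type*} [CommMonoid M] (f : ZMod n → M) :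
    ∏ i ∈ Finset.range n, f (i : ZMod n) = ∏ z : ZMod n, f z := by
  refine Finset.prod_nbij' (fun i => (i : ZMod n)) (fun z => z.val) (fun a _ => Finset.mem_univ _)
    (fun z _ => Finset.mem_range.2 z.val_lt) (fun a ha => ZMod.val_cast_of_lt (Finset.mem_range.1 ha))
    (fun z _ => by simp [ZMod.natCast_val, ZMod.cast_id]) (fun a _ => rfl)

lemma sum_range_eq_sum_zmod {M : Type*} [AddCommMonoid M] (f : ZMod n → M) :
    ∑ i ∈ Finset.range n, f (i : ZMod n) = ∑ z : ZMod n, f z := by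
  refine Finset.sum_nbij' (fun i => (i : ZMod n)) (fun z => z.val) (fun a _ => Finset.mem_univ _)
    (fun z _ => Finset.mem_range.2 z.val_lt) (fun a ha => ZMod.val_cast_of_lt (Finset.mem_range.1 ha))
    (fun z _ => by simp [ZMod.natCast_val, ZMod.cast_id]) (fun a _ => rfl)

lemma sum_eC {c : ZMod n} (hc : c ≠ 0) : ∑ z : ZMod n, eC n (z * c) = 0 := by
  have h1 : ∑ z : ZMod n, eC n (z * c) = ∑ i ∈ Finset.range n, eC n c ^ i := by
    rw [← sum_range_eq_sum_zmod n (fun z => eC n (z * c))]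
    exact Finset.sum_congr rfl fun i _ => eC_pow n i c
  have h2 := geom_sum_mul (eC n c) n
  rw [eC_pow_n, sub_self] at h2
  have h3 : eC n c - 1 ≠ 0 := sub_ne_zero.2 (eC_ne_one n hc)
  rw [h1]
  exact (mul_eq_zero.1 h2).resolve_right h3

noncomputable def Vm : Matrix (ZMod n) (ZMod n) ℂ := fun i j => eC n (i * j)
noncomputable def Um : Matrix (ZMod n) (ZMod n) ℂ := fun i j => (n : ℂ)⁻¹ * eC n (-(i * j))
noncomputable def Pm (c : ZMod n) : Matrix (ZMod n) (ZMod n) ℂ :=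
  fun i j => if j = i + c then 1 else 0

lemma Pm_mul_Vm (c : ZMod n) :
    Pm n c * Vm n = Vm n * diagonal (fun j => eC n (c * j)) := by
  ext i j
  rw [mul_apply, mul_diagonal]
  simp only [Pm, ite_mul, one_mul, zero_mul]
  rw [Finset.sum_ite_eq' Finset.univ (i + c) (fun z => Vm n z j)]
  simp only [Finset.mem_univ, if_pos, Vm]
  rw [← eC_add]
  congr 1
  ring

lemma Vm_mul_Um : Vm n * Um n = 1 := by
  ext i j
  rw [mul_apply, one_apply]
  have key : ∀ z : ZMod n, Vm n i z * Um n z j = (n : ℂ)⁻¹ * eC n (z * (i - j)) := by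
    intro z
    show eC n (i * z) * ((n : ℂ)⁻¹ * eC n (-(z * j))) = _
    rw [mul_left_comm, ← eC_add]
    congr 2
    ring
  rw [Finset.sum_congr rfl fun z _ => key z, ← Finset.mul_sum]
  by_cases h : i = j
  · subst h
    simp only [sub_self, mul_zero, eC_zero, if_pos]
    rw [Finset.sum_const, Finset.card_univ, ZMod.card, nsmul_eq_mul, mul_one]
    exact inv_mul_cancel₀ (Nat.cast_ne_zero.2 (NeZero.ne n))
  · rw [sum_eC n (sub_ne_zero.2 h), mul_zero, if_neg h]

lemma Um_mul_Vm : Um n * Vm n = 1 := by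
  ext i j
  rw [mul_apply, one_apply]
  have key : ∀ z : ZMod n, Um n i z * Vm n z j = (n : ℂ)⁻¹ * eC n (z * (j - i)) := by
    intro z
    show (n : ℂ)⁻¹ * eC n (-(i * z)) * eC n (z * j) = _
    rw [mul_assoc, ← eC_add]
    congr 2
    ring
  rw [Finset.sum_congr rfl fun z _ => key z, ← Finset.mul_sum]
  by_cases h : i = j
  · subst h
    simp only [sub_self, mul_zero, eC_zero, if_pos]
    rw [Finset.sum_const, Finset.card_univ, ZMod.card, nsmul_eq_mul, mul_one]
    exact inv_mul_cancel₀ (Nat.cast_ne_zero.2 (NeZero.ne n))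
  · rw [sum_eC n (sub_ne_zero.2 (Ne.symm h)), mul_zero, if_neg h]

lemma charpoly_conj {m : Type} [Fintype m] [DecidableEq m] (W U M : Matrix m m ℂ)
    (h1 : W * U = 1) (_h2 : U * W = 1) : (W * M * U).charpoly = M.charpoly := by
  have hWU : W.map Polynomial.C * U.map Polynomial.C = 1 := by
    rw [← Matrix.map_mul, h1, Matrix.map_one _ (map_zero _) (map_one _)]
  have hc : charmatrix (W * M * U) = W.map Polynomial.C * charmatrix M * U.map Polynomial.C := by
    rw [charmatrix, charmatrix, mul_sub, sub_mul]
    congr 1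
    · rw [← (scalar_commute (X : ℂ[X]) (fun r' => mul_comm _ r') (W.map Polynomial.C)).eq,
        mul_assoc, hWU, mul_one]
    · simp only [RingHom.mapMatrix_apply, Matrix.map_mul]
  have hdet : (W.map Polynomial.C).det * (U.map Polynomial.C).det = 1 := by
    rw [← det_mul, hWU, det_one]
  rw [Matrix.charpoly, Matrix.charpoly, hc, det_mul, det_mul,
    mul_comm ((W.map Polynomial.C).det), mul_assoc, hdet, mul_one]

lemma charmatrix_blockDiagonal {o m : Type} [Fintype o] [DecidableEq o] [Fintype m]
    [DecidableEq m] (B : o → Matrix m m ℂ) :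
    charmatrix (blockDiagonal B) = blockDiagonal (fun j => charmatrix (B j)) := by
  ext x y
  obtain ⟨i, a⟩ := x
  obtain ⟨j, b⟩ := y
  by_cases hab : a = b
  · subst hab
    by_cases hij : i = j
    · subst hij
      simp [charmatrix_apply, blockDiagonal_apply]
    · simp [charmatrix_apply, blockDiagonal_apply, diagonal_apply, Prod.ext_iff, hij]
  · simp [charmatrix_apply, blockDiagonal_apply, diagonal_apply, Prod.ext_iff, hab]

lemma adj_inl (hl0 : (l : ZMod n) ≠ 0) (i : ZMod n) (x : ZMod n ⊕ ZMod n) :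
    (IGraph n k l).Adj (.inl i) x ↔
      x = .inl (i + l) ∨ x = .inl (i - l) ∨ x = .inr i := by
  cases x with
  | inl j =>
    rw [IGraph, SimpleGraph.fromRel_adj]
    simp only [IRel, ne_eq, Sum.inl.injEq, Sum.inr.injEq, reduceCtorEq, or_false]
    constructor
    · rintro ⟨hne, h | h⟩
      · exact Or.inl (by rw [h])
      · exact Or.inr (by rw [h, add_sub_cancel_right])
    · rintro (h | h)
      · rw [h]
        exact ⟨fun hh => hl0 (by linear_combination -hh), Or.inl rfl⟩
      · rw [h]
        exact ⟨fun hh => hl0 (by linear_combination hh), Or.inr (by ring)⟩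
  | inr j =>
    rw [IGraph, SimpleGraph.fromRel_adj]
    simp only [IRel, ne_eq, reduceCtorEq, not_false_iff, true_and, or_false, false_or,
      Sum.inr.injEq]
    exact eq_comm

lemma adj_inr (hk0 : (k : ZMod n) ≠ 0) (i : ZMod n) (x : ZMod n ⊕ ZMod n) :
    (IGraph n k l).Adj (.inr i) x ↔
      x = .inr (i + k) ∨ x = .inr (i - k) ∨ x = .inl i := by
  cases x with
  | inr j =>
    rw [IGraph, SimpleGraph.fromRel_adj]
    simp only [IRel, ne_eq, Sum.inr.injEq, Sum.inl.injEq, reduceCtorEq, or_false]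
    constructor
    · rintro ⟨hne, h | h⟩
      · exact Or.inl (by rw [h])
      · exact Or.inr (by rw [h, add_sub_cancel_right])
    · rintro (h | h)
      · rw [h]
        exact ⟨fun hh => hk0 (by linear_combination -hh), Or.inl rfl⟩
      · rw [h]
        exact ⟨fun hh => hk0 (by linear_combination hh), Or.inr (by ring)⟩
  | inl j =>
    rw [IGraph, SimpleGraph.fromRel_adj]
    simp only [IRel, ne_eq, reduceCtorEq, not_false_iff, true_and, false_or, or_false,
      Sum.inl.injEq]

lemma deg_inl (hl0 : (l : ZMod n) ≠ 0) (h2l : (l : ZMod n) + l ≠ 0) (i : ZMod n) :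
    (IGraph n k l).degree (.inl i) = 3 := by
  have hnb : (IGraph n k l).neighborFinset (.inl i) =
      {.inl (i + l), .inl (i - l), .inr i} := by
    ext x
    rw [SimpleGraph.mem_neighborFinset, adj_inl n k l hl0]
    simp [Finset.mem_insert]
  rw [SimpleGraph.degree, hnb]
  rw [Finset.card_insert_of_notMem, Finset.card_insert_of_notMem, Finset.card_singleton]
  · simp
  · simp only [Finset.mem_insert, Finset.mem_singleton, Sum.inl.injEq, reduceCtorEq, or_false]
    exact fun h => h2l (by linear_combination h)

lemma deg_inr (hk0 : (k : ZMod n) ≠ 0) (h2k : (k : ZMod n) + k ≠ 0) (i : ZMod n) :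
    (IGraph n k l).degree (.inr i) = 3 := by
  have hnb : (IGraph n k l).neighborFinset (.inr i) =
      {.inr (i + k), .inr (i - k), .inl i} := by
    ext x
    rw [SimpleGraph.mem_neighborFinset, adj_inr n k l hk0]
    simp [Finset.mem_insert]
  rw [SimpleGraph.degree, hnb]
  rw [Finset.card_insert_of_notMem, Finset.card_insert_of_notMem, Finset.card_singleton]
  · simp
  · simp only [Finset.mem_insert, Finset.mem_singleton, Sum.inr.injEq, reduceCtorEq, or_false]
    exact fun h => h2k (by linear_combination h)

lemma block_entry (c : ZMod n) (hc0 : c ≠ 0) (h2c : c + c ≠ 0) (i j : ZMod n) :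
    ((if i = j then (3:ℂ) else 0) - if j = i + c ∨ j = i - c then 1 else 0) =
      ((3:ℂ) • (1 : Matrix (ZMod n) (ZMod n) ℂ) - Pm n c - Pm n (-c)) i j := by
  have haddne : i + c ≠ i - c := fun hh => h2c (by linear_combination hh)
  have hil : i ≠ i + c := fun hh => hc0 (by linear_combination -hh)
  have hil' : i ≠ i - c := fun hh => hc0 (by linear_combination hh)
  simp only [Matrix.sub_apply, Matrix.smul_apply, Matrix.one_apply, Pm, smul_eq_mul,
    ← sub_eq_add_neg]
  by_cases h1 : j = i + c <;> by_cases h2 : j = i - c <;> by_cases h3 : i = j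
  · exact absurd (h3.trans h1) hil
  · exact absurd (h1.symm.trans h2) haddne
  · exact absurd (h3.trans h1) hil
  · simp [h1, h2, h3, hc0, hil, hil', haddne, Ne.symm haddne]
  · exact absurd (h3.trans h2) hil'
  · simp [h1, h2, h3, hc0, hil, hil', haddne, Ne.symm haddne]
  · subst h3
    simp [h1, h2, hc0, hil, hil', haddne, Ne.symm haddne]
  · simp [h1, h2, h3, hc0, hil, hil', haddne, Ne.symm haddne]

lemma lap_eq (hl0 : (l : ZMod n) ≠ 0) (hk0 : (k : ZMod n) ≠ 0)
    (h2l : (l : ZMod n) + l ≠ 0) (h2k : (k : ZMod n) + k ≠ 0) :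
    lapI n k l ℂ = fromBlocks
      ((3 : ℂ) • 1 - Pm n l - Pm n (-(l : ZMod n))) (-1) (-1)
      ((3 : ℂ) • 1 - Pm n k - Pm n (-(k : ZMod n))) := by
  have hentry : ∀ a b, lapI n k l ℂ a b =
      (if a = b then ((IGraph n k l).degree a : ℂ) else 0) -
        (if (IGraph n k l).Adj a b then 1 else 0) := by
    intro a b
    rw [lapI, SimpleGraph.lapMatrix, Matrix.sub_apply, SimpleGraph.degMatrix,
      Matrix.diagonal_apply, SimpleGraph.adjMatrix_apply]
  ext x y
  cases x with
  | inl i =>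
    cases y with
    | inl j =>
      rw [hentry, deg_inl n k l hl0 h2l]
      simp only [adj_inl n k l hl0, Sum.inl.injEq, Sum.inr.injEq, reduceCtorEq, or_false,
        Nat.cast_ofNat, fromBlocks_apply₁₁]
      exact block_entry n _ hl0 h2l i j
    | inr j =>
      rw [hentry]
      simp only [adj_inl n k l hl0, Sum.inl.injEq, Sum.inr.injEq, reduceCtorEq, false_or,
        or_false, fromBlocks_apply₁₂, Matrix.neg_apply, Matrix.one_apply, if_false]
      by_cases h : j = i
      · simp [h]
      · simp [h, Ne.symm h]
  | inr i =>
    cases y with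
    | inl j =>
      rw [hentry]
      simp only [adj_inr n k l hk0, Sum.inl.injEq, Sum.inr.injEq, reduceCtorEq, false_or,
        or_false, fromBlocks_apply₂₁, Matrix.neg_apply, Matrix.one_apply, if_false]
      by_cases h : j = i
      · simp [h]
      · simp [h, Ne.symm h]
    | inr j =>
      rw [hentry, deg_inr n k l hk0 h2k]
      simp only [adj_inr n k l hk0, Sum.inl.injEq, Sum.inr.injEq, reduceCtorEq, or_false,
        Nat.cast_ofNat, fromBlocks_apply₂₂]
      exact block_entry n _ hk0 h2k i j

/-- diagonal entries -/
noncomputable def dd (c j : ZMod n) : ℂ := 3 - eC n (c * j) - eC n (-(c * j))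

lemma circ_mul_Vm (c : ZMod n) :
    ((3 : ℂ) • 1 - Pm n c - Pm n (-c)) * Vm n = Vm n * diagonal (dd n c) := by
  have hdiag : diagonal (dd n c) =
      (3 : ℂ) • 1 - diagonal (fun j => eC n (c * j)) - diagonal (fun j => eC n (-(c * j))) := by
    rw [Matrix.smul_one_eq_diagonal]
    ext i j
    by_cases h : i = j <;> simp [diagonal_apply, h, dd]
  rw [hdiag, Matrix.mul_sub, Matrix.mul_sub, Matrix.sub_mul, Matrix.sub_mul,
    Matrix.smul_mul, Matrix.mul_smul, Matrix.one_mul, Matrix.mul_one,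
    Pm_mul_Vm, Pm_mul_Vm]
  simp only [neg_mul]

noncomputable def Wm : Matrix (ZMod n ⊕ ZMod n) (ZMod n ⊕ ZMod n) ℂ :=
  fromBlocks (Vm n) 0 0 (Vm n)
noncomputable def Wim : Matrix (ZMod n ⊕ ZMod n) (ZMod n ⊕ ZMod n) ℂ :=
  fromBlocks (Um n) 0 0 (Um n)
noncomputable def Mm : Matrix (ZMod n ⊕ ZMod n) (ZMod n ⊕ ZMod n) ℂ :=
  fromBlocks (diagonal (dd n l)) (-1) (-1) (diagonal (dd n k))

lemma Wm_mul_Wim : Wm n * Wim n = 1 := by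
  rw [Wm, Wim, fromBlocks_multiply]
  simp [Vm_mul_Um, fromBlocks_one]

lemma Wim_mul_Wm : Wim n * Wm n = 1 := by
  rw [Wm, Wim, fromBlocks_multiply]
  simp [Um_mul_Vm, fromBlocks_one]

lemma lap_conj (hl0 : (l : ZMod n) ≠ 0) (hk0 : (k : ZMod n) ≠ 0)
    (h2l : (l : ZMod n) + l ≠ 0) (h2k : (k : ZMod n) + k ≠ 0) :
    lapI n k l ℂ = Wm n * Mm n k l * Wim n := by
  have hmul : lapI n k l ℂ * Wm n = Wm n * Mm n k l := by
    rw [lap_eq n k l hl0 hk0 h2l h2k, Wm, Mm, fromBlocks_multiply, fromBlocks_multiply]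
    rw [circ_mul_Vm, circ_mul_Vm]
    congr 1 <;> simp
  calc lapI n k l ℂ = lapI n k l ℂ * (Wm n * Wim n) := by rw [Wm_mul_Wim, Matrix.mul_one]
    _ = (lapI n k l ℂ * Wm n) * Wim n := by rw [Matrix.mul_assoc]
    _ = Wm n * Mm n k l * Wim n := by rw [hmul]

def sig : (Fin 2 × ZMod n) ≃ (ZMod n ⊕ ZMod n) where
  toFun p := if p.1 = 0 then Sum.inl p.2 else Sum.inr p.2
  invFun x := Sum.elim (fun j => ((0 : Fin 2), j)) (fun j => ((1 : Fin 2), j)) x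
  left_inv p := by
    obtain ⟨a, j⟩ := p
    fin_cases a <;> simp
  right_inv x := by cases x <;> simp

noncomputable def Bm (j : ZMod n) : Matrix (Fin 2) (Fin 2) ℂ :=
  !![dd n l j, -1; -1, dd n k j]

lemma Mm_eq_reindex : Mm n k l = (reindex (sig n) (sig n)) (blockDiagonal (Bm n k l)) := by
  ext x y
  rw [Matrix.reindex_apply]
  cases x <;> cases y <;>
    simp [Mm, sig, blockDiagonal_apply, Bm, diagonal_apply, Matrix.one_apply, eq_comm] <;>
    split_ifs <;> simp

lemma charpoly_Bm (j : ZMod n) :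
    (Bm n k l j).charpoly = (X - C (dd n l j)) * (X - C (dd n k j)) - 1 := by
  rw [Matrix.charpoly, Matrix.det_fin_two]
  simp [charmatrix_apply, Bm, diagonal_apply]

lemma charpoly_lap (hl0 : (l : ZMod n) ≠ 0) (hk0 : (k : ZMod n) ≠ 0)
    (h2l : (l : ZMod n) + l ≠ 0) (h2k : (k : ZMod n) + k ≠ 0) :
    (lapI n k l ℂ).charpoly =
      ∏ z : ZMod n, ((X - C (dd n l z)) * (X - C (dd n k z)) - 1) := by
  rw [lap_conj n k l hl0 hk0 h2l h2k,
    charpoly_conj _ _ _ (Wm_mul_Wim n) (Wim_mul_Wm n),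
    Mm_eq_reindex, Matrix.charpoly_reindex, Matrix.charpoly,
    charmatrix_blockDiagonal, det_blockDiagonal]
  exact Finset.prod_congr rfl fun j _ => charpoly_Bm n k l j

end IGraphAux
end IGraphCharpolyAux

open IGraphAux in
open Polynomial Finset in
/-- The characteristic polynomial of the Laplacian of `I(n,k,l)` over `ℂ` factors as
`∏_{j=0}^{n-1} ((X - 3 + ε^{jk} + ε^{-jk})(X - 3 + ε^{jl} + ε^{-jl}) - 1)`,
with `ε = exp(2πi/n)`. -/
theorem charpoly_laplacian_IGraph (n k l : ℕ) [NeZero n]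
    (hk : 1 ≤ k) (hkl : k ≤ l) (hn : 2 * l < n) :
    (lapI n k l ℂ).charpoly =
      ∏ j ∈ Finset.range n,
        ((X - 3 + C (Complex.exp (2 * Real.pi * Complex.I / n) ^ (j * k)) +
            C ((Complex.exp (2 * Real.pi * Complex.I / n) ^ (j * k))⁻¹)) *
          (X - 3 + C (Complex.exp (2 * Real.pi * Complex.I / n) ^ (j * l)) +
            C ((Complex.exp (2 * Real.pi * Complex.I / n) ^ (j * l))⁻¹)) - 1) := by
  have hl0 : (l : ZMod n) ≠ 0 := by
    rw [Ne, ZMod.natCast_eq_zero_iff]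
    intro h
    have := Nat.le_of_dvd (by omega) h
    omega
  have hk0 : (k : ZMod n) ≠ 0 := by
    rw [Ne, ZMod.natCast_eq_zero_iff]
    intro h
    have := Nat.le_of_dvd (by omega) h
    omega
  have h2l : (l : ZMod n) + l ≠ 0 := by
    have h2 : ((2 * l : ℕ) : ZMod n) ≠ 0 := by
      rw [Ne, ZMod.natCast_eq_zero_iff]
      intro h
      have := Nat.le_of_dvd (by omega) h
      omega
    intro hh
    apply h2
    push_cast
    linear_combination hh
  have h2k : (k : ZMod n) + k ≠ 0 := by
    have h2 : ((2 * k : ℕ) : ZMod n) ≠ 0 := by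
      rw [Ne, ZMod.natCast_eq_zero_iff]
      intro h
      have := Nat.le_of_dvd (by omega) h
      omega
    intro hh
    apply h2
    push_cast
    linear_combination hh
  rw [charpoly_lap n k l hl0 hk0 h2l h2k]
  rw [← prod_range_eq_prod_zmod n
    (fun z => (X - C (dd n l z)) * (X - C (dd n k z)) - 1)]
  refine Finset.prod_congr rfl fun j _ => ?_
  have hek : (Complex.exp (2 * Real.pi * Complex.I / n) ^ (j * k)) = eC n ((k : ZMod n) * j) := by
    rw [show ((k : ZMod n) * j) = ((j * k : ℕ) : ZMod n) by push_cast; ring, eC_natCast, eps]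
  have hel : (Complex.exp (2 * Real.pi * Complex.I / n) ^ (j * l)) = eC n ((l : ZMod n) * j) := by
    rw [show ((l : ZMod n) * j) = ((j * l : ℕ) : ZMod n) by push_cast; ring, eC_natCast, eps]
  rw [hek, hel, ← eC_neg, ← eC_neg, dd, dd, map_sub, map_sub, map_sub, map_sub]
  simp only [map_ofNat]
  ring
end

section
/- Let n and k be positive integers and set m = gcd(n,k). Then ∏_{j} (2 − 2·cos(2πjk/n)) = (n/m)^{2m}, where the product runs over all integers j with 1 ≤ j ≤ n − 1 such that n does not divide j·k. -/
open Finset Polynomial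

/-- For a primitive `d`-th root of unity `ω`, `∏_{r=1}^{d-1} (1 - ω^r) = d`. -/
lemma base_prod {d : ℕ} (hd : 0 < d) {ω : ℂ} (hω : IsPrimitiveRoot ω d) :
    ∏ r ∈ Finset.Ico 1 d, (1 - ω ^ r) = (d : ℂ) := by
  have hpoly : (X : ℂ[X]) ^ d - C 1 = ∏ i ∈ Finset.range d, (X - C (ω ^ i * 1)) :=
    X_pow_sub_C_eq_prod hω hd (one_pow d)
  have hsplit : ∏ i ∈ Finset.range d, (X - C (ω ^ i)) =
      (X - 1) * ∏ r ∈ Finset.Ico 1 d, (X - C (ω ^ r)) := by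
    rw [Finset.prod_range_eq_mul_Ico _ hd]
    simp
  have hgeom : ((X : ℂ[X]) - 1) * ∑ i ∈ Finset.range d, X ^ i = X ^ d - 1 := by
    rw [mul_comm]; exact geom_sum_mul X d
  have hX1 : (X : ℂ[X]) - 1 ≠ 0 := by
    have := Polynomial.X_sub_C_ne_zero (1 : ℂ); simpa using this
  have hmain : ∏ r ∈ Finset.Ico 1 d, (X - C (ω ^ r)) = ∑ i ∈ Finset.range d, (X : ℂ[X]) ^ i := by
    apply mul_left_cancel₀ hX1
    rw [hgeom, ← hsplit]
    simpa using hpoly.symm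
  have := congrArg (Polynomial.eval 1) hmain
  simpa [Polynomial.eval_prod] using this

/-- Key lemma: for `0 < d` and `a` coprime to `d`,
`∏_{r=1}^{d-1} (2 - 2 cos(2π a r / d)) = d ^ 2`. -/
lemma key_prod {d a : ℕ} (hd : 0 < d) (ha : Nat.Coprime a d) :
    ∏ r ∈ Finset.Ico 1 d, (2 - 2 * Real.cos (2 * Real.pi * a * r / d)) = (d : ℝ) ^ 2 := by
  set ω : ℂ := Complex.exp (2 * Real.pi * Complex.I * (a / d)) with hωdef
  have hω : IsPrimitiveRoot ω d := Complex.isPrimitiveRoot_exp_of_coprime a d hd.ne' ha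
  have hωinv : IsPrimitiveRoot ω⁻¹ d := hω.inv
  have hfac : ∀ r : ℕ, ((2 - 2 * Real.cos (2 * Real.pi * a * r / d) : ℝ) : ℂ) =
      (1 - ω ^ r) * (1 - (ω⁻¹) ^ r) := by
    intro r
    have hd0 : (d : ℂ) ≠ 0 := Nat.cast_ne_zero.mpr hd.ne'
    have hωr : ω ^ r = Complex.exp (((2 * Real.pi * a * r / d : ℝ) : ℂ) * Complex.I) := by
      rw [hωdef, ← Complex.exp_nat_mul]
      congr 1
      push_cast
      field_simp
    have hωrinv : (ω⁻¹) ^ r =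
        Complex.exp (-((2 * Real.pi * a * r / d : ℝ) : ℂ) * Complex.I) := by
      rw [inv_pow, hωr, ← Complex.exp_neg, neg_mul]
    rw [hωr, hωrinv]
    set θ : ℝ := 2 * Real.pi * a * r / d with hθ
    have h2c : 2 * Complex.cos (θ : ℂ) =
        Complex.exp ((θ : ℂ) * Complex.I) + Complex.exp (-(θ : ℂ) * Complex.I) :=
      Complex.two_cos (θ : ℂ)
    have hmul : Complex.exp ((θ : ℂ) * Complex.I) * Complex.exp (-(θ : ℂ) * Complex.I) = 1 := by
      rw [← Complex.exp_add]; ring_nf; exact Complex.exp_zero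
    have hcos : ((Real.cos θ : ℝ) : ℂ) = Complex.cos (θ : ℂ) := Complex.ofReal_cos θ
    push_cast [hcos]
    linear_combination -h2c - hmul
  have key : ((∏ r ∈ Finset.Ico 1 d, (2 - 2 * Real.cos (2 * Real.pi * a * r / d)) : ℝ) : ℂ)
      = (((d : ℝ) ^ 2 : ℝ) : ℂ) := by
    rw [Complex.ofReal_prod]
    calc ∏ r ∈ Finset.Ico 1 d, ((2 - 2 * Real.cos (2 * Real.pi * a * r / d) : ℝ) : ℂ)
        = ∏ r ∈ Finset.Ico 1 d, ((1 - ω ^ r) * (1 - (ω⁻¹) ^ r)) :=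
          Finset.prod_congr rfl fun r _ => hfac r
      _ = (∏ r ∈ Finset.Ico 1 d, (1 - ω ^ r)) * ∏ r ∈ Finset.Ico 1 d, (1 - (ω⁻¹) ^ r) :=
          Finset.prod_mul_distrib
      _ = (d : ℂ) * (d : ℂ) := by rw [base_prod hd hω, base_prod hd hωinv]
      _ = (((d : ℝ) ^ 2 : ℝ) : ℂ) := by push_cast; ring
  exact_mod_cast key

open Finset in
/-- For positive integers `n, k` with `m = gcd(n,k)`:
`∏_j (2 - 2cos(2πjk/n)) = (n/m)^{2m}`, the product over `1 ≤ j ≤ n-1` with `n ∤ jk`. -/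
theorem prod_two_sub_two_cos (n k : ℕ) (hn : 0 < n) (hk : 0 < k) :
    ∏ j ∈ (Finset.Ico 1 n).filter (fun j => ¬ (n ∣ j * k)),
        (2 - 2 * Real.cos (2 * Real.pi * j * k / n)) =
      ((n : ℝ) / (Nat.gcd n k : ℝ)) ^ (2 * Nat.gcd n k) := by
  set m := Nat.gcd n k with hm
  have hm0 : 0 < m := Nat.gcd_pos_of_pos_left _ hn
  set d := n / m with hd
  set a := k / m with ha
  have hmn : m ∣ n := Nat.gcd_dvd_left n k
  have hmk : m ∣ k := Nat.gcd_dvd_right n k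
  have hnd : n = m * d := (Nat.mul_div_cancel' hmn).symm
  have hka : k = m * a := (Nat.mul_div_cancel' hmk).symm
  have hd0 : 0 < d := Nat.div_pos (Nat.le_of_dvd hn hmn) hm0
  have hcop : Nat.Coprime d a := Nat.coprime_div_gcd_div_gcd hm0
  -- the divisibility condition
  have hdvd : ∀ j : ℕ, (n ∣ j * k) ↔ d ∣ j := by
    intro j
    rw [hnd, hka, show j * (m * a) = m * (j * a) by ring,
      mul_dvd_mul_iff_left (a := m) hm0.ne']
    exact ⟨fun h => hcop.dvd_of_dvd_mul_right h, fun h => h.mul_right a⟩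
  -- reindex the product
  have hreindex : ∏ j ∈ (Finset.Ico 1 n).filter (fun j => ¬ (n ∣ j * k)),
        (2 - 2 * Real.cos (2 * Real.pi * j * k / n)) =
      ∏ p ∈ Finset.range m ×ˢ Finset.Ico 1 d,
        (2 - 2 * Real.cos (2 * Real.pi * a * p.2 / d)) := by
    apply Finset.prod_nbij' (fun j => (j / d, j % d)) (fun p => p.1 * d + p.2)
    · intro j hj
      simp only [Finset.mem_filter, Finset.mem_Ico, hdvd] at hj
      obtain ⟨⟨h1, h2⟩, h3⟩ := hj
      simp only [Finset.mem_product, Finset.mem_range, Finset.mem_Ico]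
      have hlt : j < d * m := by rw [mul_comm, ← hnd]; exact h2
      refine ⟨Nat.div_lt_of_lt_mul hlt, ?_, Nat.mod_lt _ hd0⟩
      exact Nat.pos_of_ne_zero fun h0 => h3 (Nat.dvd_of_mod_eq_zero h0)
    · intro p hp
      simp only [Finset.mem_product, Finset.mem_range, Finset.mem_Ico] at hp
      obtain ⟨h1, h2, h3⟩ := hp
      simp only [Finset.mem_filter, Finset.mem_Ico, hdvd]
      refine ⟨⟨by omega, ?_⟩, ?_⟩
      · rw [hnd]
        calc p.1 * d + p.2 < p.1 * d + d := by omega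
          _ = (p.1 + 1) * d := by ring
          _ ≤ m * d := Nat.mul_le_mul_right d h1
      · intro hdd
        have h4 : d ∣ p.2 := (Nat.dvd_add_right (Dvd.intro_left p.1 rfl)).mp hdd
        have := Nat.le_of_dvd (by omega) h4
        omega
    · intro j hj
      exact Nat.div_add_mod' j d
    · intro p hp
      simp only [Finset.mem_product, Finset.mem_range, Finset.mem_Ico] at hp
      obtain ⟨h1, h2, h3⟩ := hp
      have hmod : (p.1 * d + p.2) % d = p.2 := by
        rw [add_comm, Nat.add_mul_mod_self_right, Nat.mod_eq_of_lt h3]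
      have hdiv : (p.1 * d + p.2) / d = p.1 := by
        rw [add_comm, Nat.add_mul_div_right _ _ hd0, Nat.div_eq_of_lt h3, zero_add]
      simp [hdiv, hmod]
    · intro j hj
      simp only [Finset.mem_filter, Finset.mem_Ico, hdvd] at hj
      congr 2
      have hdR : (d : ℝ) ≠ 0 := Nat.cast_ne_zero.mpr hd0.ne'
      have hmR : (m : ℝ) ≠ 0 := Nat.cast_ne_zero.mpr hm0.ne'
      have hsplitj : (j : ℝ) = (j / d : ℕ) * d + (j % d : ℕ) := by
        exact_mod_cast (congrArg (Nat.cast : ℕ → ℝ) (Nat.div_add_mod' j d)).symm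
      have hangle : 2 * Real.pi * j * k / n =
          2 * Real.pi * a * (j % d : ℕ) / d + (j / d * a : ℕ) * (2 * Real.pi) := by
        rw [hnd, hka]
        push_cast
        rw [hsplitj]
        field_simp
        ring
      rw [hangle, Real.cos_add_nat_mul_two_pi]
  rw [hreindex, Finset.prod_product]
  have hinner : ∀ x ∈ Finset.range m, ∏ y ∈ Finset.Ico 1 d,
      (2 - 2 * Real.cos (2 * Real.pi * a * y / d)) = (d : ℝ) ^ 2 :=
    fun x _ => key_prod hd0 hcop.symm
  rw [Finset.prod_congr rfl hinner, Finset.prod_const, Finset.card_range, ← pow_mul]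
  have hdcast : (d : ℝ) = (n : ℝ) / (m : ℝ) := by
    rw [hd]
    exact Nat.cast_div hmn (Nat.cast_ne_zero.mpr hm0.ne')
  rw [hdcast]
end
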